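/- arXiv:2107.07207 — 6 statements merged into one kernel-verified Lean document; each statement's English description precedes it below -/
import Mathlib

section
/- Let (f_n) be a sequence of entire functions with an admissible sequence of growth exponents (λ_n) and associated growth function µ. Suppose (f_n) converges locally uniformly on a nonempty connected open set D ⊆ ℂ to a non-constant holomorphic function f. Then every point of ∂D ∩ cl{z ∈ ℂ : µ(z) > 1} is a cluster point of zeros of (f_n). -/
/-!
If only finitely many `f n` vanish near `z₀`, then on a disc `B(w, R)` around a point `w ∈ D`
close to `z₀` with `F w ≠ 0`, the functions `u n = log ‖f n‖ / λ n` are eventually real parts of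
holomorphic functions. Admissibility bounds them from above on the disc, and since `f n → F` near
`w`, they tend to `0` uniformly on a small disc around `w`. By Borel–Carathéodory and Cauchy
estimates (a quantitative Vitali argument) `u n → 0` on `B(w, R / 2)`, so `µ = 1` there. This is
impossible near a point of `cl{µ > 1}`.
-/

open Filter Topology Metric Set
open scoped Nat

namespace Complex

theorem norm_le_two_mul_of_re_le_of_mem_ball_half {f : ℂ → ℂ} {c z : ℂ} {M R : ℝ}
    (hM : 0 < M) (hf : DifferentiableOn ℂ f (ball c R)) (hre : ∀ u ∈ ball c R, (f u).re ≤ M)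
    (hfc : f c = 0) (hz : z ∈ ball c (R / 2)) : ‖f z‖ ≤ 2 * M := by
  have hzR : ‖z - c‖ < R / 2 := mem_ball_iff_norm.mp hz
  have hR : 0 < R := by linarith [norm_nonneg (z - c)]
  have hshift : ‖f (c + (z - c))‖ ≤ 2 * M * ‖z - c‖ / (R - ‖z - c‖) := by
    refine borelCaratheodory_zero hM (f := fun u ↦ f (c + u)) ?_ ?_ hR ?_ (by simpa)
    · exact hf.comp (by fun_prop) fun u hu ↦ by simpa using hu
    · exact fun u hu ↦ hre _ (by simpa using hu)
    · simp only [mem_ball_zero_iff]; linarith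
  rw [add_sub_cancel] at hshift
  refine hshift.trans ?_
  rw [div_le_iff₀ (by linarith)]
  nlinarith

theorem exists_differentiableOn_eq_mul_exp {g : ℂ → ℂ} {c : ℂ} {R : ℝ} (hR : 0 < R)
    (hg : DifferentiableOn ℂ g (ball c R)) (hne : ∀ z ∈ ball c R, g z ≠ 0) :
    ∃ L : ℂ → ℂ, DifferentiableOn ℂ L (ball c R) ∧ L c = 0 ∧
      ∀ z ∈ ball c R, g z = g c * exp (L z) := by
  have hlogDeriv : DifferentiableOn ℂ (logDeriv g) (ball c R) :=
    (hg.deriv isOpen_ball).div hg hne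
  obtain ⟨L, hLc, hL⟩ := hlogDeriv.isExactOn_ball.with_val_at c 0
  have hLd : DifferentiableOn ℂ L (ball c R) := fun z hz ↦
    (hL z hz).differentiableAt.differentiableWithinAt
  have hexpL : DifferentiableOn ℂ (exp ∘ L) (ball c R) :=
    differentiable_exp.comp_differentiableOn hLd
  obtain ⟨a, -, ha⟩ := (logDeriv_eqOn_iff hg hexpL isOpen_ball (convex_ball c R).isPreconnected
    (fun z _ ↦ exp_ne_zero _) hne).mp fun z hz ↦ by
      rw [logDeriv_comp differentiable_exp.differentiableAt (hL z hz).differentiableAt,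
        logDeriv_exp, (hL z hz).deriv]
      simp
  have hac : g c = a := by simpa [hLc] using ha (mem_ball_self hR)
  exact ⟨L, hLd, hLc, fun z hz ↦ by simpa [hac] using ha hz⟩

theorem norm_taylorTerm_le_of_forall_mem_sphere_norm_le {f : ℂ → ℂ} {c z : ℂ} {r B : ℝ}
    (hr : 0 < r) (hf : DiffContOnCl ℂ f (ball c r)) (hB : ∀ u ∈ sphere c r, ‖f u‖ ≤ B) (k : ℕ) :
    ‖(k ! : ℂ)⁻¹ • (z - c) ^ k • iteratedDeriv k f c‖ ≤ B * (‖z - c‖ / r) ^ k := by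
  have hcauchy := norm_iteratedDeriv_le_of_forall_mem_sphere_norm_le k hr hf hB
  have hk : (0 : ℝ) < k ! := by positivity
  rw [norm_smul, norm_smul, norm_inv, Complex.norm_natCast, norm_pow, div_pow,
    inv_mul_le_iff₀ hk]
  calc ‖z - c‖ ^ k * ‖iteratedDeriv k f c‖ ≤ ‖z - c‖ ^ k * (k ! * B / r ^ k) := by gcongr
    _ = k ! * (B * (‖z - c‖ ^ k / r ^ k)) := by ring

end Complex

theorem tendsto_zero_of_norm_le_of_tendstoUniformlyOn_ball {ι : Type*} {l : Filter ι}
    {g : ι → ℂ → ℂ} {w z : ℂ} {R ρ B : ℝ} (hρ : 0 < ρ)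
    (hg : ∀ᶠ i in l, DifferentiableOn ℂ (g i) (ball w R))
    (hB : ∀ᶠ i in l, ∀ u ∈ ball w R, ‖g i u‖ ≤ B)
    (hsmall : TendstoUniformlyOn g 0 l (ball w ρ))
    (hz : z ∈ ball w R) : Tendsto (g · z) l (𝓝 0) := by
  obtain ⟨r, hzr, hrR⟩ := exists_between (mem_ball_iff_norm.mp hz)
  have hr : 0 < r := (norm_nonneg _).trans_lt hzr
  set s := min ρ r / 2 with hs_def
  have hs : 0 < s := by positivity
  have hsρ : s < ρ := by have := min_le_left ρ r; linarith
  have hsR : s < R := by have := min_le_right ρ r; linarith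
  -- Cauchy estimates on the circle of radius `s < ρ` send each Taylor coefficient at `w` to `0`;
  -- those on the circle of radius `r ∈ (‖z - w‖, R)` dominate them by a geometric series.
  let T : ι → ℕ → ℂ := fun i k ↦ (k ! : ℂ)⁻¹ • (z - w) ^ k • iteratedDeriv k (g i) w
  have htaylor : ∀ᶠ i in l, ∑' k, T i k = g i z := hg.mono fun i hi ↦
    Complex.taylorSeries_eq_on_ball hi hz
  have hdom : ∀ᶠ i in l, ∀ k, ‖T i k‖ ≤ B * (‖z - w‖ / r) ^ k := by
    filter_upwards [hg, hB] with i hgi hBi k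
    exact Complex.norm_taylorTerm_le_of_forall_mem_sphere_norm_le hr (hgi.diffContOnCl_ball
      (closedBall_subset_ball hrR)) (fun u hu ↦ hBi u (sphere_subset_closedBall.trans
      (closedBall_subset_ball hrR) hu)) k
  have hterm : ∀ k, Tendsto (T · k) l (𝓝 0) := by
    intro k
    have hC : (‖z - w‖ / s) ^ k + 1 ≠ 0 := by positivity
    refine (Asymptotics.isLittleO_const_iff hC).mp
      (Asymptotics.IsLittleO.of_bound fun δ hδ ↦ ?_)
    filter_upwards [hg, Metric.tendstoUniformlyOn_iff.mp hsmall δ hδ] with i hgi hsi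
    calc ‖T i k‖ ≤ δ * (‖z - w‖ / s) ^ k :=
          Complex.norm_taylorTerm_le_of_forall_mem_sphere_norm_le hs
            (hgi.diffContOnCl_ball (closedBall_subset_ball hsR))
            (fun u hu ↦ by simpa using (hsi u (sphere_subset_closedBall.trans
              (closedBall_subset_ball hsρ) hu)).le) k
      _ ≤ δ * ‖(‖z - w‖ / s) ^ k + 1‖ := by
          rw [Real.norm_of_nonneg (by positivity)]; gcongr; linarith
  have hsum : Summable fun k ↦ B * (‖z - w‖ / r) ^ k :=
    (summable_geometric_of_lt_one (by positivity) ((div_lt_one hr).mpr hzr)).mul_left B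
  simpa using (tendsto_tsum_of_dominated_convergence hsum hterm hdom).congr' htaylor

theorem tendsto_zero_of_re_le_of_re_le_near_center {ι : Type*} {l : Filter ι}
    {g : ι → ℂ → ℂ} {w z : ℂ} {R ρ A : ℝ} (hρ : 0 < ρ)
    (hg : ∀ᶠ i in l, DifferentiableOn ℂ (g i) (ball w R) ∧ g i w = 0)
    (hA : ∀ᶠ i in l, ∀ u ∈ ball w R, (g i u).re ≤ A)
    (hsmall : ∀ δ > 0, ∀ᶠ i in l, ∀ u ∈ ball w ρ, (g i u).re ≤ δ)
    (hz : z ∈ ball w (R / 2)) : Tendsto (g · z) l (𝓝 0) := by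
  have hR : 0 < R := by linarith [dist_nonneg.trans_lt (mem_ball.mp hz)]
  set ρ' := min ρ R
  have hρ' : 0 < ρ' := lt_min hρ hR
  refine tendsto_zero_of_norm_le_of_tendstoUniformlyOn_ball (half_pos hρ') (B := 2 * max A 1)
    (hg.mono fun i hi ↦ hi.1.mono (ball_subset_ball (by linarith))) ?_ ?_ hz
  · filter_upwards [hg, hA] with i ⟨hgi, hgw⟩ hAi u hu
    exact Complex.norm_le_two_mul_of_re_le_of_mem_ball_half (by positivity) hgi
      (fun u hu ↦ (hAi u hu).trans (le_max_left _ _)) hgw hu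
  · rw [Metric.tendstoUniformlyOn_iff]
    intro ε hε
    filter_upwards [hg, hsmall (ε / 4) (by positivity)] with i ⟨hgi, hgw⟩ hsi u hu
    have := Complex.norm_le_two_mul_of_re_le_of_mem_ball_half (by positivity)
      (hgi.mono (ball_subset_ball (min_le_right _ _)))
      (fun u hu ↦ hsi u (ball_subset_ball (min_le_left _ _) hu)) hgw hu
    rw [Pi.zero_apply, dist_zero_left]
    linarith

theorem tendsto_log_norm_mul_of_le_of_tendstoUniformlyOn {ι : Type*} {l : Filter ι}
    {g : ι → ℂ → ℂ} {t : ι → ℝ} {w z : ℂ} {R ρ M : ℝ} (hρ : 0 < ρ)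
    (hg : ∀ᶠ i in l, DifferentiableOn ℂ (g i) (ball w R) ∧ ∀ u ∈ ball w R, g i u ≠ 0)
    (hM : ∀ᶠ i in l, ∀ u ∈ ball w R, Real.log ‖g i u‖ * t i ≤ M)
    (hsmall : TendstoUniformlyOn (fun i u ↦ Real.log ‖g i u‖ * t i) 0 l (ball w ρ))
    (hz : z ∈ ball w (R / 2)) : Tendsto (fun i ↦ Real.log ‖g i z‖ * t i) l (𝓝 0) := by
  have hR : 0 < R := by linarith [dist_nonneg.trans_lt (mem_ball.mp hz)]
  -- a logarithm of `g i` normalised at `w`, chosen for every `i` (junk when `hg` fails at `i`)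
  have hlog : ∀ i, ∃ L : ℂ → ℂ,
      (DifferentiableOn ℂ (g i) (ball w R) ∧ ∀ u ∈ ball w R, g i u ≠ 0) →
        DifferentiableOn ℂ L (ball w R) ∧ L w = 0 ∧
          ∀ u ∈ ball w R, g i u = g i w * Complex.exp (L u) := fun i ↦ by
    by_cases hi : DifferentiableOn ℂ (g i) (ball w R) ∧ ∀ u ∈ ball w R, g i u ≠ 0
    · exact (Complex.exists_differentiableOn_eq_mul_exp hR hi.1 hi.2).imp fun _ hL _ ↦ hL
    · exact ⟨0, fun h ↦ absurd h hi⟩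
  choose L hL using hlog
  set N : ι → ℂ → ℂ := fun i u ↦ (t i : ℂ) * L i u
  have hsmall' := Metric.tendstoUniformlyOn_iff.mp hsmall
  have hre : ∀ᶠ i in l, ∀ u ∈ ball w R,
      (N i u).re = Real.log ‖g i u‖ * t i - Real.log ‖g i w‖ * t i := by
    filter_upwards [hg] with i hi u hu
    obtain ⟨-, -, hexp⟩ := hL i hi
    rw [hexp u hu, norm_mul, Complex.norm_exp, Real.log_mul (norm_ne_zero_iff.mpr
      (hi.2 w (mem_ball_self hR))) (Real.exp_ne_zero _), Real.log_exp]
    simp [N]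
    ring
  have hN : Tendsto (N · z) l (𝓝 0) := by
    refine tendsto_zero_of_re_le_of_re_le_near_center (lt_min hρ hR) (A := M + 1) ?_ ?_ ?_ hz
    · filter_upwards [hg] with i hi
      obtain ⟨hLd, hLw, -⟩ := hL i hi
      exact ⟨hLd.const_mul _, by simp [N, hLw]⟩
    · filter_upwards [hre, hM, hsmall' 1 one_pos] with i hrei hMi hsi u hu
      have := hsi w (mem_ball_self hρ)
      rw [Pi.zero_apply, dist_zero_left, Real.norm_eq_abs, abs_lt] at this
      rw [hrei u hu]
      linarith [hMi u hu]
    · intro δ hδ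
      filter_upwards [hre, hsmall' (δ / 2) (half_pos hδ)] with i hrei hsi u hu
      have hu' := hsi u (ball_subset_ball (min_le_left _ _) hu)
      have hw := hsi w (mem_ball_self hρ)
      rw [Pi.zero_apply, dist_zero_left, Real.norm_eq_abs, abs_lt] at hu' hw
      rw [hrei u (ball_subset_ball (min_le_right _ _) hu)]
      linarith
  have hre_z : Tendsto (fun i ↦ (N i z).re + Real.log ‖g i w‖ * t i) l (𝓝 0) := by
    simpa using (Complex.continuous_re.tendsto 0 |>.comp hN).add
      (hsmall.tendsto_at (mem_ball_self hρ))
  refine hre_z.congr' ?_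
  filter_upwards [hre] with i hrei
  rw [hrei z (ball_subset_ball (by linarith) hz)]
  ring

theorem tendstoUniformlyOn_log_norm_mul_zero {ι : Type*} {l : Filter ι} {g : ι → ℂ → ℂ}
    {t : ι → ℝ} {s : Set ℂ} {c : ℂ} (hc : c ≠ 0) (ht : Tendsto t l (𝓝 0))
    (hg : ∀ᶠ i in l, ∀ u ∈ s, dist (g i u) c < ‖c‖ / 2) :
    TendstoUniformlyOn (fun i u ↦ Real.log ‖g i u‖ * t i) 0 l s := by
  have hc' : 0 < ‖c‖ := norm_pos_iff.mpr hc
  set K := |Real.log (‖c‖ / 2)| + |Real.log (3 * ‖c‖ / 2)|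
  have hlog : ∀ x : ℂ, dist x c < ‖c‖ / 2 → |Real.log ‖x‖| ≤ K := by
    intro x hx
    rw [dist_eq_norm] at hx
    have hlow : ‖c‖ / 2 ≤ ‖x‖ := by linarith [norm_sub_norm_le c x, norm_sub_rev c x]
    have hup : ‖x‖ ≤ 3 * ‖c‖ / 2 := by linarith [norm_sub_norm_le x c]
    rw [abs_le]
    constructor
    · linarith [Real.log_le_log (by positivity) hlow, neg_abs_le (Real.log (‖c‖ / 2)),
        abs_nonneg (Real.log (3 * ‖c‖ / 2))]
    · linarith [Real.log_le_log (by linarith) hup, le_abs_self (Real.log (3 * ‖c‖ / 2)),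
        abs_nonneg (Real.log (‖c‖ / 2))]
  rw [Metric.tendstoUniformlyOn_iff]
  intro ε hε
  have hK : 0 < K + 1 := by positivity
  filter_upwards [hg, (Metric.tendsto_nhds.mp ht) (ε / (K + 1)) (by positivity)] with i hgi hti u hu
  rw [Pi.zero_apply, dist_zero_left, Real.norm_eq_abs, abs_mul]
  rw [Real.dist_eq, sub_zero, lt_div_iff₀ hK] at hti
  nlinarith [hlog _ (hgi u hu), abs_nonneg (t i), abs_nonneg (Real.log ‖g i u‖)]

theorem Real.log_mul_le_log_of_rpow_le {x y C : ℝ} (hx : 0 < x) (h : x ^ y ≤ C) :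
    Real.log x * y ≤ Real.log C := by
  rw [Real.rpow_def_of_pos hx] at h
  exact (Real.le_log_iff_exp_le ((Real.exp_pos _).trans_le h)).mpr h

theorem tendsto_rpow_one_of_tendsto_log_mul {ι : Type*} {l : Filter ι} {x t : ι → ℝ}
    (hx : ∀ᶠ i in l, 0 < x i) (h : Tendsto (fun i ↦ Real.log (x i) * t i) l (𝓝 0)) :
    Tendsto (fun i ↦ x i ^ t i) l (𝓝 1) := by
  have hexp := Real.continuous_exp.tendsto 0 |>.comp h
  rw [Real.exp_zero] at hexp
  refine hexp.congr' ?_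
  filter_upwards [hx] with i hi
  rw [Function.comp_apply, Real.rpow_def_of_pos hi]

theorem TendstoLocallyUniformlyOn.exists_ball_eventually_dist_lt {ι α β : Type*}
    [PseudoMetricSpace α] [PseudoMetricSpace β] {l : Filter ι} {f : ι → α → β} {F : α → β}
    {D : Set α} {w : α} {ε : ℝ} (h : TendstoLocallyUniformlyOn f F l D) (hD : IsOpen D)
    (hw : w ∈ D) (hF : ContinuousAt F w) (hε : 0 < ε) :
    ∃ ρ > 0, ∀ᶠ i in l, ∀ u ∈ ball w ρ, dist (f i u) (F w) < ε := by
  obtain ⟨t, ht, hft⟩ := Metric.tendstoLocallyUniformlyOn_iff.mp h (ε / 2) (half_pos hε) w hw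
  rw [hD.nhdsWithin_eq hw] at ht
  have hcont : ∀ᶠ u in 𝓝 w, dist (F u) (F w) < ε / 2 :=
    Metric.tendsto_nhds.mp hF (ε / 2) (half_pos hε)
  obtain ⟨ρ, hρ, hball⟩ := Metric.mem_nhds_iff.mp (inter_mem ht hcont)
  refine ⟨ρ, hρ, hft.mono fun i hi u hu ↦ ?_⟩
  have h1 := hi u (hball hu).1
  have h2 : dist (F u) (F w) < ε / 2 := (hball hu).2
  linarith [dist_triangle_left (f i u) (F w) (F u)]

theorem AnalyticOnNhd.exists_ne_zero_of_inter_nonempty {F : ℂ → ℂ} {D V : Set ℂ}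
    (hF : AnalyticOnNhd ℂ F D) (hD : IsPreconnected D) (hD' : IsOpen D)
    (hne : ∃ z ∈ D, F z ≠ 0) (hV : IsOpen V) (hDV : (D ∩ V).Nonempty) :
    ∃ w ∈ D ∩ V, F w ≠ 0 := by
  by_contra! hzero
  obtain ⟨x, hx⟩ := hDV
  have hloc : F =ᶠ[𝓝 x] 0 :=
    Filter.mem_of_superset ((hD'.inter hV).mem_nhds hx) fun u hu ↦ hzero u hu
  obtain ⟨z, hz, hFz⟩ := hne
  exact hFz (hF.eqOn_zero_of_preconnected_of_eventuallyEq_zero hD hx.1 hloc hz)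

theorem stmt_0_general
    (f : ℕ → ℂ → ℂ) (hf : ∀ n, Differentiable ℂ (f n))
    (lam : ℕ → ℝ) (hlam' : Tendsto lam atTop atTop)
    (hadm : ∀ K : Set ℂ, IsCompact K →
      ∃ C : ℝ, ∀ᶠ n in atTop, ∀ z ∈ K, ‖f n z‖ ^ (1 / lam n) ≤ C)
    (μ : ℂ → ℝ)
    (hμ : ∀ z : ℂ, μ z = limsup (fun n => ‖f n z‖ ^ (1 / lam n)) atTop)
    (D : Set ℂ) (hD : IsOpen D) (hDconn : IsConnected D)
    (F : ℂ → ℂ) (hFhol : DifferentiableOn ℂ F D)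
    (hconv : TendstoLocallyUniformlyOn f F atTop D)
    (hnc : ¬ ∃ c : ℂ, ∀ z ∈ D, F z = c)
    (z₀ : ℂ) (hz₀ : z₀ ∈ frontier D ∩ closure {z : ℂ | 1 < μ z}) :
    ∀ U ∈ 𝓝 z₀, {n : ℕ | ∃ z ∈ U, f n z = 0}.Infinite := by
  intro U hU
  by_contra hfin
  have hnz : ∀ᶠ n in atTop, ∀ z ∈ U, f n z ≠ 0 := by
    rw [← Nat.cofinite_eq_atTop, eventually_cofinite]
    simpa using Set.not_infinite.mp hfin
  have hne : ∃ z ∈ D, F z ≠ 0 := by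
    by_contra! h
    exact hnc ⟨0, h⟩
  obtain ⟨r, hr, hrU⟩ := Metric.mem_nhds_iff.mp hU
  obtain ⟨x, hx⟩ := mem_closure_iff.mp (frontier_subset_closure hz₀.1) _ isOpen_ball
    (mem_ball_self (by positivity : 0 < r / 8))
  obtain ⟨w, ⟨hwD, hwz₀⟩, hFw⟩ := (hFhol.analyticOnNhd hD).exists_ne_zero_of_inter_nonempty
    hDconn.isPreconnected hD hne isOpen_ball ⟨x, hx.2, hx.1⟩
  rw [mem_ball] at hwz₀
  obtain ⟨z', hz'μ, hz'z₀⟩ := Metric.mem_closure_iff.mp hz₀.2 (r / 8) (by positivity)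
  obtain ⟨ρ, hρ, hnear⟩ := hconv.exists_ball_eventually_dist_lt hD hwD
    (hFhol.continuousOn.continuousAt (hD.mem_nhds hwD)) (half_pos (norm_pos_iff.mpr hFw))
  obtain ⟨C, hC⟩ := hadm (closedBall w (r / 2)) (isCompact_closedBall _ _)
  have hwU : ball w (r / 2) ⊆ U := fun u hu ↦ hrU (by
    rw [mem_ball] at hu ⊢; linarith [dist_triangle u w z₀])
  have hlog : Tendsto (fun n ↦ Real.log ‖f n z'‖ * (1 / lam n)) atTop (𝓝 0) := by
    refine tendsto_log_norm_mul_of_le_of_tendstoUniformlyOn hρ (R := r / 2) (M := Real.log C)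
      (hnz.mono fun n hn ↦ ⟨(hf n).differentiableOn, fun u hu ↦ hn u (hwU hu)⟩) ?_
      (tendstoUniformlyOn_log_norm_mul_zero hFw
        (by simpa only [one_div, Function.comp_def] using tendsto_inv_atTop_zero.comp hlam') hnear)
      (by rw [mem_ball]; linarith [dist_triangle_right z' w z₀, dist_comm z₀ z'])
    filter_upwards [hC, hnz] with n hCn hn u hu
    exact Real.log_mul_le_log_of_rpow_le (norm_pos_iff.mpr (hn u (hwU hu)))
      (hCn u (ball_subset_closedBall hu))
  have hroot : Tendsto (fun n ↦ ‖f n z'‖ ^ (1 / lam n)) atTop (𝓝 1) :=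
    tendsto_rpow_one_of_tendsto_log_mul (hnz.mono fun n hn ↦ norm_pos_iff.mpr
      (hn z' (hrU (by rw [mem_ball, dist_comm]; linarith)))) hlog
  rw [mem_ofPred_eq, hμ, hroot.limsup_eq] at hz'μ
  exact lt_irrefl 1 hz'μ

/-- proto-Jentzsch theorem. If `(f n)` is a sequence of entire functions with an
admissible sequence of growth exponents `lam` and associated growth function `μ`, and `(f n)`
converges locally uniformly on a nonempty connected open set `D` to a non-constant holomorphic
function `F`, then every point of `∂D ∩ cl{μ > 1}` is a cluster point of zeros of `(f n)`. -/
theorem stmt_0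
    (f : ℕ → ℂ → ℂ) (hf : ∀ n, Differentiable ℂ (f n))
    (lam : ℕ → ℝ) (hlam : StrictMono lam) (hlam' : Tendsto lam atTop atTop)
    (hadm : ∀ K : Set ℂ, IsCompact K →
      ∃ C : ℝ, ∀ᶠ n in atTop, ∀ z ∈ K, ‖f n z‖ ^ (1 / lam n) ≤ C)
    (μ : ℂ → ℝ)
    (hμ : ∀ z : ℂ, μ z = limsup (fun n => ‖f n z‖ ^ (1 / lam n)) atTop)
    (D : Set ℂ) (hD : IsOpen D) (hDconn : IsConnected D)
    (F : ℂ → ℂ) (hFhol : DifferentiableOn ℂ F D)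
    (hconv : TendstoLocallyUniformlyOn f F atTop D)
    (hnc : ¬ ∃ c : ℂ, ∀ z ∈ D, F z = c)
    (z₀ : ℂ) (hz₀ : z₀ ∈ frontier D ∩ closure {z : ℂ | 1 < μ z}) :
    ∀ U ∈ 𝓝 z₀, {n : ℕ | ∃ z ∈ U, f n z = 0}.Infinite :=
  stmt_0_general f hf lam hlam' hadm μ hμ D hD hDconn F hFhol hconv hnc z₀ hz₀
end

section
/- Let (f_n) be a sequence of entire functions with an admissible sequence of growth exponents (λ_n) and associated growth function µ. (i) If the sequence (f_n(z₀)) converges at a point z₀ ∈ ℂ, then µ(z₀) ≤ 1, and moreover µ(z₀) = 1 if the limit is nonzero. (ii) If (f_n) converges pointwise on an open set D ⊆ ℂ, then D ∩ cl{z : µ(z) > 1} = ∅. -/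
open Filter Topology

/-! Since `c ^ (1 / λₙ) → 1` for every `c > 0`, a sequence of moduli that is eventually bounded by
some `M` has `limsup |aₙ| ^ (1 / λₙ) ≤ 1`, and one converging to a positive limit has
`|aₙ| ^ (1 / λₙ) → 1`. For (ii), `{μ > 1}` misses the open set `D` by (i), hence so does its
closure. -/

section RpowOneDiv

variable {ι : Type*} {l : Filter ι} {a lam : ι → ℝ}

theorem tendsto_rpow_one_div_of_tendsto_of_pos {A : ℝ} (ha : Tendsto a l (𝓝 A)) (hA : 0 < A)
    (hlam : Tendsto lam l atTop) : Tendsto (fun i => a i ^ (1 / lam i)) l (𝓝 1) := by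
  simpa using ha.rpow (tendsto_const_nhds (x := (1 : ℝ)) |>.div_atTop hlam) (Or.inl hA.ne')

theorem limsup_rpow_one_div_le_one [NeBot l] (ha₀ : ∀ i, 0 ≤ a i)
    (ha : IsBoundedUnder (· ≤ ·) l a) (hlam : Tendsto lam l atTop) :
    limsup (fun i => a i ^ (1 / lam i)) l ≤ 1 := by
  obtain ⟨M, hM⟩ := ha
  set M' := max M 1
  have hM' : Tendsto (fun i => M' ^ (1 / lam i)) l (𝓝 1) :=
    tendsto_rpow_one_div_of_tendsto_of_pos tendsto_const_nhds (by positivity) hlam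
  have hle : ∀ᶠ i in l, a i ^ (1 / lam i) ≤ M' ^ (1 / lam i) := by
    filter_upwards [eventually_map.mp hM, hlam.eventually_gt_atTop 0] with i hai hlami
    exact Real.rpow_le_rpow (ha₀ i) (hai.trans (le_max_left M 1)) (by positivity)
  calc limsup (fun i => a i ^ (1 / lam i)) l
      ≤ limsup (fun i => M' ^ (1 / lam i)) l :=
        limsup_le_limsup hle
          (isCoboundedUnder_le_of_le l fun i => Real.rpow_nonneg (ha₀ i) _)
          hM'.isBoundedUnder_le
    _ = 1 := hM'.limsup_eq

end RpowOneDiv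

theorem stmt_2_general
    (f : ℕ → ℂ → ℂ)
    (lam : ℕ → ℝ) (hlam' : Tendsto lam atTop atTop)
    (μ : ℂ → ℝ)
    (hμ : ∀ z : ℂ, μ z = limsup (fun n => ‖f n z‖ ^ (1 / lam n)) atTop) :
    (∀ (z₀ : ℂ) (L : ℂ), Tendsto (fun n => f n z₀) atTop (𝓝 L) →
      μ z₀ ≤ 1 ∧ (L ≠ 0 → μ z₀ = 1)) ∧
    (∀ D : Set ℂ, IsOpen D →
      (∀ z ∈ D, ∃ L : ℂ, Tendsto (fun n => f n z) atTop (𝓝 L)) →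
      D ∩ closure {z : ℂ | 1 < μ z} = ∅) := by
  have pointwise : ∀ (z₀ : ℂ) (L : ℂ), Tendsto (fun n => f n z₀) atTop (𝓝 L) →
      μ z₀ ≤ 1 ∧ (L ≠ 0 → μ z₀ = 1) := by
    intro z₀ L hL
    rw [hμ]
    exact ⟨limsup_rpow_one_div_le_one (fun _ => norm_nonneg _) hL.norm.isBoundedUnder_le hlam',
      fun hL0 => (tendsto_rpow_one_div_of_tendsto_of_pos hL.norm (norm_pos_iff.mpr hL0)
        hlam').limsup_eq⟩
  refine ⟨pointwise, fun D hD hconv => ?_⟩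
  rw [← Set.disjoint_iff_inter_eq_empty]
  refine Disjoint.closure_right (Set.disjoint_left.mpr fun z hzD hz => ?_) hD
  obtain ⟨L, hL⟩ := hconv z hzD
  exact (pointwise z L hL).1.not_gt hz

/-- (i) if `(f n z₀)` converges then `μ z₀ ≤ 1`, with equality if the limit is
nonzero; (ii) if `(f n)` converges pointwise on an open set `D`, then
`D ∩ cl{z : μ z > 1} = ∅`. -/
theorem stmt_2
    (f : ℕ → ℂ → ℂ) (hf : ∀ n, Differentiable ℂ (f n))
    (lam : ℕ → ℝ) (hlam : StrictMono lam) (hlam' : Tendsto lam atTop atTop)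
    (hadm : ∀ K : Set ℂ, IsCompact K →
      ∃ C : ℝ, ∀ᶠ n in atTop, ∀ z ∈ K, ‖f n z‖ ^ (1 / lam n) ≤ C)
    (μ : ℂ → ℝ)
    (hμ : ∀ z : ℂ, μ z = limsup (fun n => ‖f n z‖ ^ (1 / lam n)) atTop) :
    (∀ (z₀ : ℂ) (L : ℂ), Tendsto (fun n => f n z₀) atTop (𝓝 L) →
      μ z₀ ≤ 1 ∧ (L ≠ 0 → μ z₀ = 1)) ∧
    (∀ D : Set ℂ, IsOpen D →
      (∀ z ∈ D, ∃ L : ℂ, Tendsto (fun n => f n z) atTop (𝓝 L)) →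
      D ∩ closure {z : ℂ | 1 < μ z} = ∅) :=
  stmt_2_general f lam hlam' μ hμ
end

section
/- Let (a_n)_{n≥0} be complex coefficients with ρ := (limsup_{n→∞} |a_n|^{1/n})^{-1} satisfying 0 < ρ < ∞, and let f_n(z) := Σ_{k=0}^n a_k z^k be the sections of the power series Σ a_n z^n. Then for every z ∈ ℂ such that f_n(z) does not tend to 0 as n → ∞, one has limsup_{n→∞} |f_n(z)|^{1/n} = max(1, |z|/ρ). -/
/-!
Write `L = limsup ‖aₙ‖^(1/n) = ρ⁻¹` and `Sₙ` for the sections at `z`. If `c > max 1 (L‖z‖)`,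
then `aₖzᵏ = O(qᵏ)` for some `q < c`, so comparison with a geometric series gives `Sₙ = O(cⁿ)`;
this is the upper bound. Conversely, `limsup ‖Sₙ‖^(1/n) < 1` would force `Sₙ → 0`, and
`‖Sₙ‖ ≤ cⁿ` eventually gives `aₙzⁿ = Sₙ - Sₙ₋₁ = O(cⁿ)`, i.e. `L‖z‖ ≤ c`.
-/

open Filter Topology Asymptotics Finset

section RootGrowth

variable {E : Type*} [SeminormedAddCommGroup E] {u : ℕ → E} {c : ℝ}

lemma exists_tendsto_ge_norm_rpow_inv_of_isBigO (hc : 0 ≤ c) (h : u =O[atTop] (c ^ ·)) :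
    ∃ v : ℕ → ℝ, Tendsto v atTop (𝓝 c) ∧ (fun n : ℕ => ‖u n‖ ^ ((n : ℝ)⁻¹)) ≤ᶠ[atTop] v := by
  obtain ⟨K, hK, hKu⟩ := h.exists_pos
  refine ⟨fun n => K ^ ((n : ℝ)⁻¹) * c, ?_, ?_⟩
  · simpa using (tendsto_const_nhds.rpow tendsto_inv_atTop_nhds_zero_nat
      (Or.inl hK.ne')).mul_const c
  filter_upwards [hKu.bound, eventually_ne_atTop 0] with n hn hn0
  have hn' : (n : ℝ) ≠ 0 := Nat.cast_ne_zero.mpr hn0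
  rw [norm_pow, Real.norm_of_nonneg hc] at hn
  calc ‖u n‖ ^ ((n : ℝ)⁻¹) ≤ (K * c ^ n) ^ ((n : ℝ)⁻¹) := by gcongr
    _ = K ^ ((n : ℝ)⁻¹) * c := by
      rw [Real.mul_rpow hK.le (by positivity), ← Real.rpow_natCast,
        ← Real.rpow_mul hc, mul_inv_cancel₀ hn', Real.rpow_one]

lemma isBoundedUnder_norm_rpow_inv_of_isBigO (hc : 0 ≤ c) (h : u =O[atTop] (c ^ ·)) :
    IsBoundedUnder (· ≤ ·) atTop (fun n : ℕ => ‖u n‖ ^ ((n : ℝ)⁻¹)) :=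
  let ⟨_, hv, huv⟩ := exists_tendsto_ge_norm_rpow_inv_of_isBigO hc h
  hv.isBoundedUnder_le.mono_le huv

lemma limsup_norm_rpow_inv_le_of_isBigO (hc : 0 ≤ c) (h : u =O[atTop] (c ^ ·)) :
    limsup (fun n : ℕ => ‖u n‖ ^ ((n : ℝ)⁻¹)) atTop ≤ c := by
  obtain ⟨v, hv, huv⟩ := exists_tendsto_ge_norm_rpow_inv_of_isBigO hc h
  rw [← hv.limsup_eq]
  exact limsup_le_limsup huv
    (isCoboundedUnder_le_of_le atTop fun n => Real.rpow_nonneg (norm_nonneg _) _)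
    hv.isBoundedUnder_le

lemma eventually_norm_le_pow_of_limsup_lt
    (hbdd : IsBoundedUnder (· ≤ ·) atTop (fun n : ℕ => ‖u n‖ ^ ((n : ℝ)⁻¹)))
    (h : limsup (fun n : ℕ => ‖u n‖ ^ ((n : ℝ)⁻¹)) atTop < c) :
    ∀ᶠ n in atTop, ‖u n‖ ≤ c ^ n := by
  filter_upwards [eventually_lt_of_limsup_lt h hbdd, eventually_ne_atTop 0] with n hn hn0
  have hn' : (n : ℝ) ≠ 0 := Nat.cast_ne_zero.mpr hn0
  calc ‖u n‖ = (‖u n‖ ^ ((n : ℝ)⁻¹)) ^ n := by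
        rw [← Real.rpow_natCast, ← Real.rpow_mul (norm_nonneg _), inv_mul_cancel₀ hn',
          Real.rpow_one]
    _ ≤ c ^ n := by gcongr

lemma isBigO_pow_of_limsup_lt
    (hbdd : IsBoundedUnder (· ≤ ·) atTop (fun n : ℕ => ‖u n‖ ^ ((n : ℝ)⁻¹)))
    (h : limsup (fun n : ℕ => ‖u n‖ ^ ((n : ℝ)⁻¹)) atTop < c) :
    u =O[atTop] (c ^ ·) :=
  .of_bound' <| (eventually_norm_le_pow_of_limsup_lt hbdd h).mono fun _ hn =>
    hn.trans (Real.le_norm_self _)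

lemma tendsto_zero_of_limsup_norm_rpow_inv_lt_one
    (hbdd : IsBoundedUnder (· ≤ ·) atTop (fun n : ℕ => ‖u n‖ ^ ((n : ℝ)⁻¹)))
    (h : limsup (fun n : ℕ => ‖u n‖ ^ ((n : ℝ)⁻¹)) atTop < 1) :
    Tendsto u atTop (𝓝 0) := by
  obtain ⟨c, hc, hc1⟩ := exists_between (max_lt h zero_lt_one)
  exact squeeze_zero_norm'
    (eventually_norm_le_pow_of_limsup_lt hbdd ((le_max_left _ _).trans_lt hc))
    (tendsto_pow_atTop_nhds_zero_of_lt_one ((le_max_right _ _).trans hc.le) hc1)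

lemma geom_sum_range_succ_le (hc : 1 < c) (n : ℕ) :
    ∑ k ∈ range (n + 1), c ^ k ≤ c / (c - 1) * c ^ n := by
  have hc' : 0 < c - 1 := sub_pos.mpr hc
  rw [geom_sum_eq hc.ne', div_mul_eq_mul_div, div_le_div_iff_of_pos_right hc', ← pow_succ']
  linarith

lemma isBigO_sum_range_succ_of_isBigO_pow (hc : 1 < c) (h : u =O[atTop] (c ^ ·)) :
    (fun n => ∑ k ∈ range (n + 1), u k) =O[atTop] (c ^ ·) := by
  obtain ⟨K, hK, hKu⟩ := bound_of_isBigO_nat_atTop h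
  have hc0 : 0 < c := one_pos.trans hc
  refine .of_bound (K * (c / (c - 1))) (Eventually.of_forall fun n => ?_)
  simp only [norm_pow, Real.norm_of_nonneg hc0.le] at hKu ⊢
  calc ‖∑ k ∈ range (n + 1), u k‖ ≤ ∑ k ∈ range (n + 1), K * c ^ k :=
        norm_sum_le_of_le _ fun k _ => hKu (pow_ne_zero k hc0.ne')
    _ = K * ∑ k ∈ range (n + 1), c ^ k := (mul_sum ..).symm
    _ ≤ K * (c / (c - 1)) * c ^ n := by
      rw [mul_assoc]; exact mul_le_mul_of_nonneg_left (geom_sum_range_succ_le hc n) hK.le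

lemma isBigO_of_isBigO_sum_range_succ (hc : 0 < c)
    (h : (fun n => ∑ k ∈ range (n + 1), u k) =O[atTop] (c ^ ·)) : u =O[atTop] (c ^ ·) := by
  have hpred : (fun n : ℕ => c ^ (n - 1)) =O[atTop] (c ^ ·) := by
    refine .of_bound c⁻¹ ?_
    filter_upwards [eventually_ne_atTop 0] with n hn
    rw [← pow_sub_one_mul hn c, norm_mul, Real.norm_of_nonneg hc.le, mul_comm,
      mul_assoc, mul_inv_cancel₀ hc.ne', mul_one]
  have hdiff := h.sub ((h.comp_tendsto (tendsto_sub_atTop_nat 1)).trans hpred)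
  refine hdiff.congr' ?_ .rfl
  filter_upwards [eventually_ne_atTop 0] with n hn
  obtain ⟨m, rfl⟩ := Nat.exists_eq_succ_of_ne_zero hn
  simp [sum_range_succ]

end RootGrowth

section PowerSeries

variable {𝕜 : Type*} [NormedDivisionRing 𝕜] {a : ℕ → 𝕜} {z : 𝕜} {c : ℝ}

lemma isBigO_mul_pow_of_limsup_lt {q : ℝ}
    (hbdd : IsBoundedUnder (· ≤ ·) atTop (fun n : ℕ => ‖a n‖ ^ ((n : ℝ)⁻¹)))
    (hq : limsup (fun n : ℕ => ‖a n‖ ^ ((n : ℝ)⁻¹)) atTop < q) (hq0 : 0 ≤ q)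
    (hqc : q * ‖z‖ ≤ c) :
    (fun n => a n * z ^ n) =O[atTop] (c ^ ·) := by
  refine .of_bound' ?_
  filter_upwards [eventually_norm_le_pow_of_limsup_lt hbdd hq] with n hn
  calc ‖a n * z ^ n‖ = ‖a n‖ * ‖z‖ ^ n := by rw [norm_mul, norm_pow]
    _ ≤ q ^ n * ‖z‖ ^ n := by gcongr
    _ = (q * ‖z‖) ^ n := (mul_pow ..).symm
    _ ≤ c ^ n := by gcongr
    _ ≤ ‖c ^ n‖ := Real.le_norm_self _

lemma isBigO_pow_div_norm_of_isBigO_sum_range_succ (hz : z ≠ 0) (hc : 0 < c)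
    (h : (fun n => ∑ k ∈ range (n + 1), a k * z ^ k) =O[atTop] (c ^ ·)) :
    a =O[atTop] ((c / ‖z‖) ^ ·) := by
  obtain ⟨K, hK⟩ := (isBigO_of_isBigO_sum_range_succ hc h).bound
  refine .of_bound K ?_
  filter_upwards [hK] with n hn
  rw [norm_pow, norm_div, norm_norm, div_pow, Real.norm_of_nonneg hc.le, ← mul_div_assoc,
    le_div_iff₀ (by positivity)]
  simpa [norm_mul, norm_pow, Real.norm_of_nonneg hc.le] using hn

lemma isBigO_sum_range_succ_of_limsup_mul_lt
    (hbdd : IsBoundedUnder (· ≤ ·) atTop (fun n : ℕ => ‖a n‖ ^ ((n : ℝ)⁻¹)))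
    (h : limsup (fun n : ℕ => ‖a n‖ ^ ((n : ℝ)⁻¹)) atTop * ‖z‖ < c) (hc : 1 < c) :
    (fun n => ∑ k ∈ range (n + 1), a k * z ^ k) =O[atTop] (c ^ ·) := by
  obtain ⟨q, hq, hqc⟩ :=
    (((continuous_mul_const ‖z‖).tendsto _).eventually (gt_mem_nhds h)).exists_gt
  have hq0 : 0 ≤ q := (le_limsup_of_frequently_le (.of_forall fun n =>
    Real.rpow_nonneg (norm_nonneg (a n)) _) hbdd).trans hq.le
  exact isBigO_sum_range_succ_of_isBigO_pow hc (isBigO_mul_pow_of_limsup_lt hbdd hq hq0 hqc.le)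

lemma limsup_mul_norm_le_of_isBigO_sum_range_succ (hz : z ≠ 0) (hc : 0 < c)
    (h : (fun n => ∑ k ∈ range (n + 1), a k * z ^ k) =O[atTop] (c ^ ·)) :
    limsup (fun n : ℕ => ‖a n‖ ^ ((n : ℝ)⁻¹)) atTop * ‖z‖ ≤ c := by
  have := limsup_norm_rpow_inv_le_of_isBigO (by positivity)
    (isBigO_pow_div_norm_of_isBigO_sum_range_succ hz hc h)
  rwa [le_div_iff₀ (norm_pos_iff.mpr hz)] at this

end PowerSeries

/-- growth function of the sections of a power series with radius of convergence
`ρ`, `0 < ρ < ∞`: if `f n z` does not tend to `0`, then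
`limsup |f n z|^(1/n) = max 1 (|z|/ρ)`. -/
theorem stmt_3
    (a : ℕ → ℂ) (ρ : ℝ) (hρ : 0 < ρ)
    (hcc : limsup (fun n : ℕ => ‖a n‖ ^ ((n : ℝ)⁻¹)) atTop = ρ⁻¹)
    (z : ℂ)
    (hz : ¬ Tendsto (fun n : ℕ => ∑ k ∈ Finset.range (n + 1), a k * z ^ k) atTop (𝓝 0)) :
    limsup (fun n : ℕ =>
        ‖∑ k ∈ Finset.range (n + 1), a k * z ^ k‖ ^ ((n : ℝ)⁻¹)) atTop
      = max 1 (‖z‖ / ρ) := by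
  set S : ℕ → ℂ := fun n => ∑ k ∈ range (n + 1), a k * z ^ k
  -- In `ℝ` the limsup of a sequence unbounded above is `0`, so `hcc` forces boundedness.
  have ha_bdd : IsBoundedUnder (· ≤ ·) atTop (fun n : ℕ => ‖a n‖ ^ ((n : ℝ)⁻¹)) := by
    by_contra h
    exact (inv_pos.mpr hρ).ne' (hcc ▸ Real.limsup_of_not_isBoundedUnder h)
  have hS : ∀ c, max 1 (‖z‖ / ρ) < c → S =O[atTop] (c ^ ·) := fun c hc =>
    isBigO_sum_range_succ_of_limsup_mul_lt ha_bdd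
      (by rw [hcc, inv_mul_eq_div]; exact (le_max_right _ _).trans_lt hc)
      ((le_max_left _ _).trans_lt hc)
  have hS_bdd := isBoundedUnder_norm_rpow_inv_of_isBigO (by positivity)
    (hS _ (lt_add_one (max 1 (‖z‖ / ρ))))
  have hge_one : 1 ≤ limsup (fun n : ℕ => ‖S n‖ ^ ((n : ℝ)⁻¹)) atTop :=
    not_lt.mp fun h => hz (tendsto_zero_of_limsup_norm_rpow_inv_lt_one hS_bdd h)
  have hge_ratio : ‖z‖ / ρ ≤ limsup (fun n : ℕ => ‖S n‖ ^ ((n : ℝ)⁻¹)) atTop := by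
    by_contra! h
    obtain ⟨c, hLc, hcz⟩ := exists_between h
    have hz0 : z ≠ 0 := by rintro rfl; simp at hcz; linarith
    have := limsup_mul_norm_le_of_isBigO_sum_range_succ hz0 (by linarith)
      (isBigO_pow_of_limsup_lt hS_bdd hLc)
    rw [hcc, inv_mul_eq_div] at this
    linarith
  exact le_antisymm (le_of_forall_gt_imp_ge_of_dense fun c hc =>
      limsup_norm_rpow_inv_le_of_isBigO (zero_le_one.trans ((le_max_left _ _).trans hc.le))
        (hS c hc)) (max_le hge_one hge_ratio)
end

section
/- Let λ_0 < λ_1 < ⋯ be reals with λ_n → ∞, let (a_n) be complex coefficients, and suppose σ_c ∈ ℝ is the abscissa of convergence of the general Dirichlet series Σ_{n=0}^∞ a_n e^{−λ_n z}, i.e. the series converges at every z with Re z > σ_c and diverges at every z with Re z < σ_c. Let f_n(z) := Σ_{k=0}^n a_k e^{−λ_k z} be the sections. Then for every z ∈ ℂ such that f_n(z) does not tend to 0 as n → ∞, one has limsup_{n→∞} |f_n(z)|^{1/λ_n} = max(1, e^{σ_c − Re z}). -/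
/-!
Write `f_n` for the sections at `z` and `θ₀ = max 0 (σc - Re z)`.

If `θ > θ₀`, the series converges at `z + θ`, so its sections there are bounded; Abel summation
against the increasing weights `e^{λ_k θ}` gives `|f_n| ≤ C e^{λ_n θ}`, hence
`limsup |f_n|^{1/λ_n} ≤ e^θ`.

Conversely `|f_n| ≥ ε` infinitely often, so the limsup is at least `1`; and if it were below
`e^θ` for some `0 < θ < σc - Re z`, then `|f_n| ≤ e^{λ_n θ}` eventually, and Abel summation
against the decreasing weights `e^{-λ_k w}`, `θ < w < σc - Re z`, would make the series converge
at `z + w`.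
-/

open Filter Topology Finset Real

lemma sum_range_succ_smul_eq {R E : Type*} [Ring R] [AddCommGroup E] [Module R E]
    (c : ℕ → R) (b : ℕ → E) (n : ℕ) :
    ∑ k ∈ range (n + 1), c k • b k =
      c n • ∑ k ∈ range (n + 1), b k -
        ∑ k ∈ range n, (c (k + 1) - c k) • ∑ j ∈ range (k + 1), b j := by
  simpa using sum_range_by_parts c b (n + 1)

lemma norm_sum_range_smul_le {E : Type*} [SeminormedAddCommGroup E] [NormedSpace ℝ E]
    {c : ℕ → ℝ} {b : ℕ → E} {B : ℝ} (hc : Monotone c) (hc0 : 0 ≤ c 0)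
    (hb : ∀ n, ‖∑ k ∈ range (n + 1), b k‖ ≤ B) (n : ℕ) :
    ‖∑ k ∈ range (n + 1), c k • b k‖ ≤ 2 * B * c n := by
  have hcn : 0 ≤ c n := hc0.trans (hc n.zero_le)
  have hterm : ∀ k,
      ‖(c (k + 1) - c k) • ∑ j ∈ range (k + 1), b j‖ ≤ B * (c (k + 1) - c k) := by
    intro k
    have hk : 0 ≤ c (k + 1) - c k := sub_nonneg.2 (hc k.le_succ)
    rw [norm_smul, Real.norm_of_nonneg hk, mul_comm]
    exact mul_le_mul_of_nonneg_right (hb k) hk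
  rw [sum_range_succ_smul_eq]
  calc _ ≤ ‖c n • ∑ k ∈ range (n + 1), b k‖
          + ‖∑ k ∈ range n, (c (k + 1) - c k) • ∑ j ∈ range (k + 1), b j‖ :=
        norm_sub_le _ _
    _ ≤ c n * B + ∑ k ∈ range n, B * (c (k + 1) - c k) := by
        gcongr
        · rw [norm_smul, Real.norm_of_nonneg hcn]
          exact mul_le_mul_of_nonneg_left (hb n) hcn
        · exact (norm_sum_le _ _).trans (sum_le_sum fun k _ => hterm k)
    _ = B * (2 * c n - c 0) := by rw [← mul_sum, sum_range_sub]; ring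
    _ ≤ 2 * B * c n := by nlinarith [(norm_nonneg _).trans (hb 0)]

lemma exists_tendsto_sum_range_smul {R E : Type*} [Ring R] [AddCommGroup E] [Module R E]
    [TopologicalSpace E] [IsTopologicalAddGroup E] (c : ℕ → R) (b : ℕ → E)
    (hlim : Tendsto (fun n => c n • ∑ k ∈ range (n + 1), b k) atTop (𝓝 0))
    (hsum : Summable fun k => (c (k + 1) - c k) • ∑ j ∈ range (k + 1), b j) :
    ∃ L, Tendsto (fun n => ∑ k ∈ range (n + 1), c k • b k) atTop (𝓝 L) :=
  ⟨_, (hlim.sub hsum.hasSum.tendsto_sum_nat).congr fun n => (sum_range_succ_smul_eq c b n).symm⟩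

lemma hasSum_sub_succ_of_antitone {v : ℕ → ℝ} {l : ℝ} (hv : Antitone v)
    (hl : Tendsto v atTop (𝓝 l)) : HasSum (fun k => v k - v (k + 1)) (v 0 - l) := by
  rw [hasSum_iff_tendsto_nat_of_nonneg (fun k => sub_nonneg.2 (hv k.le_succ))]
  simpa only [sum_range_sub'] using hl.const_sub (v 0)

/-- For `l ≤ m`, a discrete form of
`e^{lθ} ∫_l^m w e^{-wt} dt ≤ ∫_l^m w e^{(θ-w)t} dt`. -/
lemma exp_mul_mul_sub_exp_le {l m θ w : ℝ} (hθ : 0 ≤ θ) (hθw : θ < w) :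
    exp (l * θ) * (exp (-(l * w)) - exp (-(m * w)))
      ≤ w / (w - θ) * (exp (l * (θ - w)) - exp (m * (θ - w))) := by
  have hw : 0 < w := hθ.trans_lt hθw
  have hwθ : 0 < w - θ := sub_pos.2 hθw
  obtain ⟨s, rfl⟩ : ∃ s, m = l + s := ⟨m - l, by ring⟩
  -- `-s (w - θ)` is a convex combination of `-s w` and `0`
  have hconv : w * exp (-(s * (w - θ))) ≤ (w - θ) * exp (-(s * w)) + θ := by
    have h := convexOn_exp.2 (Set.mem_univ (-(s * w))) (Set.mem_univ 0)
      (div_nonneg hwθ.le hw.le) (div_nonneg hθ hw.le) (by field_simp; ring)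
    have harg : (w - θ) / w * -(s * w) = -(s * (w - θ)) := by field_simp
    simp only [smul_eq_mul, mul_zero, add_zero, exp_zero, mul_one, harg] at h
    calc w * exp (-(s * (w - θ))) ≤ w * ((w - θ) / w * exp (-(s * w)) + θ / w) := by gcongr
      _ = (w - θ) * exp (-(s * w)) + θ := by field_simp
  have e1 : exp (l * θ) * exp (-(l * w)) = exp (l * (θ - w)) := by
    rw [← exp_add]; ring_nf
  have e2 : exp (l * θ) * exp (-((l + s) * w)) = exp (l * (θ - w)) * exp (-(s * w)) := by
    rw [← exp_add, ← exp_add]; ring_nf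
  have e3 : exp ((l + s) * (θ - w)) = exp (l * (θ - w)) * exp (-(s * (w - θ))) := by
    rw [← exp_add]; ring_nf
  rw [mul_sub, e1, e2, e3, div_mul_eq_mul_div, le_div_iff₀ hwθ]
  nlinarith [mul_le_mul_of_nonneg_left hconv (exp_pos (l * (θ - w))).le]

section Growth

variable {E : Type*} [SeminormedAddCommGroup E] {lam : ℕ → ℝ} {f : ℕ → E}

lemma tendsto_const_rpow_one_div (hlam : Tendsto lam atTop atTop) {C : ℝ} (hC : 0 < C) :
    Tendsto (fun n => C ^ (1 / lam n)) atTop (𝓝 1) := by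
  have h := (continuousAt_const_rpow hC.ne' (b := 0)).tendsto.comp
    (tendsto_inv_atTop_zero.comp hlam)
  simpa [one_div, Function.comp_def] using h

lemma eventually_norm_rpow_le (hlam : Tendsto lam atTop atTop) {C θ : ℝ} (hC : 0 ≤ C)
    (hf : ∀ n, ‖f n‖ ≤ C * exp (lam n * θ)) :
    ∀ᶠ n in atTop, ‖f n‖ ^ (1 / lam n) ≤ C ^ (1 / lam n) * exp θ := by
  filter_upwards [hlam.eventually_gt_atTop 0] with n hn
  calc ‖f n‖ ^ (1 / lam n) ≤ (C * exp (lam n * θ)) ^ (1 / lam n) :=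
        rpow_le_rpow (norm_nonneg _) (hf n) (one_div_nonneg.2 hn.le)
    _ = C ^ (1 / lam n) * exp θ := by
        rw [mul_rpow hC (exp_pos _).le, ← exp_mul]
        field_simp

lemma isBoundedUnder_norm_rpow (hlam : Tendsto lam atTop atTop) {C θ : ℝ} (hC : 0 < C)
    (hf : ∀ n, ‖f n‖ ≤ C * exp (lam n * θ)) :
    IsBoundedUnder (· ≤ ·) atTop fun n => ‖f n‖ ^ (1 / lam n) :=
  (((tendsto_const_rpow_one_div hlam hC).mul_const (exp θ)).isBoundedUnder_le).mono_le
    (eventually_norm_rpow_le hlam hC.le hf)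

lemma limsup_norm_rpow_le_exp (hlam : Tendsto lam atTop atTop) {C θ : ℝ} (hC : 0 < C)
    (hf : ∀ n, ‖f n‖ ≤ C * exp (lam n * θ)) :
    limsup (fun n => ‖f n‖ ^ (1 / lam n)) atTop ≤ exp θ := by
  have hlim : Tendsto (fun n => C ^ (1 / lam n) * exp θ) atTop (𝓝 (exp θ)) := by
    simpa using (tendsto_const_rpow_one_div hlam hC).mul_const (exp θ)
  calc _ ≤ limsup (fun n => C ^ (1 / lam n) * exp θ) atTop :=
        limsup_le_limsup (eventually_norm_rpow_le hlam hC.le hf)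
          (isCoboundedUnder_le_of_le atTop fun n => by positivity) hlim.isBoundedUnder_le
    _ = exp θ := hlim.limsup_eq

lemma one_le_limsup_norm_rpow (hlam : Tendsto lam atTop atTop)
    (hbdd : IsBoundedUnder (· ≤ ·) atTop fun n => ‖f n‖ ^ (1 / lam n))
    (hf : ¬ Tendsto f atTop (𝓝 0)) :
    1 ≤ limsup (fun n => ‖f n‖ ^ (1 / lam n)) atTop := by
  obtain ⟨ε, hε, hfreq⟩ : ∃ ε > 0, ∃ᶠ n in atTop, ε ≤ ‖f n‖ := by
    simpa only [NormedAddGroup.tendsto_nhds_zero, not_forall, not_eventually, not_lt, exists_prop]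
      using hf
  refine le_of_forall_lt_imp_le_of_dense fun r hr => le_limsup_of_frequently_le ?_ hbdd
  have hr' := (tendsto_const_rpow_one_div hlam hε).eventually (lt_mem_nhds hr)
  refine (hfreq.and_eventually (hr'.and (hlam.eventually_gt_atTop 0))).mono ?_
  rintro n ⟨hεn, hrn, hn⟩
  exact hrn.le.trans (rpow_le_rpow hε.le hεn (one_div_nonneg.2 hn.le))

lemma eventually_norm_le_exp_of_limsup_lt (hlam : Tendsto lam atTop atTop)
    (hbdd : IsBoundedUnder (· ≤ ·) atTop fun n => ‖f n‖ ^ (1 / lam n)) {θ : ℝ}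
    (h : limsup (fun n => ‖f n‖ ^ (1 / lam n)) atTop < exp θ) :
    ∀ᶠ n in atTop, ‖f n‖ ≤ exp (lam n * θ) := by
  filter_upwards [eventually_lt_of_limsup_lt h hbdd, hlam.eventually_gt_atTop 0]
    with n hlt hn
  calc ‖f n‖ = (‖f n‖ ^ (1 / lam n)) ^ lam n := by
        rw [← rpow_mul (norm_nonneg _), one_div_mul_cancel hn.ne', rpow_one]
    _ ≤ exp θ ^ lam n := rpow_le_rpow (by positivity) hlt.le hn.le
    _ = exp (lam n * θ) := by rw [← exp_mul, mul_comm]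

end Growth

section DirichletSeries

noncomputable def dirichletSection (lam : ℕ → ℝ) (a : ℕ → ℂ) (z : ℂ) (n : ℕ) :
    ℂ :=
  ∑ k ∈ range (n + 1), a k * Complex.exp (-(lam k : ℂ) * z)

variable {lam : ℕ → ℝ} {a : ℕ → ℂ} {z : ℂ}

lemma dirichletSection_add_ofReal (θ : ℝ) (n : ℕ) :
    dirichletSection lam a (z + θ) n =
      ∑ k ∈ range (n + 1),
        exp (-(lam k * θ)) • (a k * Complex.exp (-(lam k : ℂ) * z)) := by
  refine sum_congr rfl fun k _ => ?_
  rw [Complex.real_smul, Complex.ofReal_exp, mul_left_comm, ← Complex.exp_add]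
  push_cast
  ring_nf

lemma norm_dirichletSection_le_of_tendsto (hmono : Monotone lam) {θ : ℝ} (hθ : 0 ≤ θ)
    (hconv : ∃ L, Tendsto (dirichletSection lam a (z + θ)) atTop (𝓝 L)) :
    ∃ C > 0, ∀ n, ‖dirichletSection lam a z n‖ ≤ C * exp (lam n * θ) := by
  obtain ⟨L, hL⟩ := hconv
  obtain ⟨B, hB⟩ := hL.norm.bddAbove_range
  have hB' : ∀ n, ‖dirichletSection lam a (z + θ) n‖ ≤ max B 1 :=
    fun n => (hB ⟨n, rfl⟩).trans (le_max_left _ _)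
  refine ⟨2 * max B 1, by positivity, fun n => ?_⟩
  have hsec : dirichletSection lam a z n = ∑ k ∈ range (n + 1),
      exp (lam k * θ) • (a k * Complex.exp (-(lam k : ℂ) * (z + θ))) := by
    simpa [mul_neg] using
      dirichletSection_add_ofReal (lam := lam) (a := a) (z := z + θ) (-θ) n
  rw [hsec]
  exact norm_sum_range_smul_le (fun i j hij => exp_le_exp.2 (by gcongr; exact hmono hij))
    (exp_pos _).le hB' n

lemma exists_tendsto_dirichletSection_of_norm_le (hmono : Monotone lam)
    (hlam : Tendsto lam atTop atTop) {θ w : ℝ} (hθ : 0 ≤ θ) (hθw : θ < w)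
    (hf : ∀ᶠ n in atTop, ‖dirichletSection lam a z n‖ ≤ exp (lam n * θ)) :
    ∃ L, Tendsto (dirichletSection lam a (z + w)) atTop (𝓝 L) := by
  set c : ℕ → ℝ := fun k => exp (-(lam k * w))
  set v : ℕ → ℝ := fun k => exp (lam k * (θ - w))
  have hv : Tendsto v atTop (𝓝 0) :=
    tendsto_exp_atBot.comp (hlam.atTop_mul_const_of_neg (sub_neg.2 hθw))
  have hv_anti : Antitone v := fun i j hij =>
    exp_le_exp.2 (mul_le_mul_of_nonpos_right (hmono hij) (sub_neg.2 hθw).le)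
  have hlim : Tendsto (fun n => c n • dirichletSection lam a z n) atTop (𝓝 0) := by
    refine squeeze_zero_norm' ?_ hv
    filter_upwards [hf] with n hn
    calc ‖c n • dirichletSection lam a z n‖ ≤ c n * exp (lam n * θ) := by
          rw [norm_smul, Real.norm_of_nonneg (exp_pos _).le]
          exact mul_le_mul_of_nonneg_left hn (exp_pos _).le
      _ = v n := by simp only [c, v, ← exp_add]; ring_nf
  have hsum : Summable fun k => (c (k + 1) - c k) • dirichletSection lam a z k := by
    refine Summable.of_norm_bounded_eventually
      ((hasSum_sub_succ_of_antitone hv_anti hv).summable.mul_left (w / (w - θ))) ?_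
    rw [Nat.cofinite_eq_atTop]
    filter_upwards [hf] with k hk
    have hck : 0 ≤ c k - c (k + 1) :=
      sub_nonneg.2 (exp_le_exp.2 (neg_le_neg
        (mul_le_mul_of_nonneg_right (hmono k.le_succ) (hθ.trans hθw.le))))
    rw [norm_smul, ← neg_sub, norm_neg, Real.norm_of_nonneg hck]
    calc (c k - c (k + 1)) * ‖dirichletSection lam a z k‖
        ≤ (c k - c (k + 1)) * exp (lam k * θ) := mul_le_mul_of_nonneg_left hk hck
      _ ≤ w / (w - θ) * (v k - v (k + 1)) := by
        rw [mul_comm]; exact exp_mul_mul_sub_exp_le hθ hθw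
  obtain ⟨L, hL⟩ := exists_tendsto_sum_range_smul c _ hlim hsum
  exact ⟨L, hL.congr fun n => (dirichletSection_add_ofReal w n).symm⟩

end DirichletSeries

/-- growth function of the sections of a general Dirichlet series with abscissa of
convergence `σc`: if `f n z` does not tend to `0`, then
`limsup |f n z|^(1/λ n) = max 1 (exp (σc - Re z))`. -/
theorem stmt_5
    (lam : ℕ → ℝ) (hlam : StrictMono lam) (hlam' : Tendsto lam atTop atTop)
    (a : ℕ → ℂ) (σc : ℝ)
    (hconv : ∀ z : ℂ, σc < z.re → ∃ L : ℂ,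
      Tendsto (fun n : ℕ => ∑ k ∈ Finset.range (n + 1),
        a k * Complex.exp (-(lam k : ℂ) * z)) atTop (𝓝 L))
    (hdiv : ∀ z : ℂ, z.re < σc → ¬ ∃ L : ℂ,
      Tendsto (fun n : ℕ => ∑ k ∈ Finset.range (n + 1),
        a k * Complex.exp (-(lam k : ℂ) * z)) atTop (𝓝 L))
    (z : ℂ)
    (hz : ¬ Tendsto (fun n : ℕ => ∑ k ∈ Finset.range (n + 1),
      a k * Complex.exp (-(lam k : ℂ) * z)) atTop (𝓝 0)) :
    limsup (fun n : ℕ =>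
        ‖∑ k ∈ Finset.range (n + 1),
          a k * Complex.exp (-(lam k : ℂ) * z)‖ ^ (1 / lam n)) atTop
      = max 1 (Real.exp (σc - z.re)) := by
  change limsup (fun n => ‖dirichletSection lam a z n‖ ^ (1 / lam n)) atTop = _
  set θ₀ := max 0 (σc - z.re)
  have hbound : ∀ θ, θ₀ < θ →
      ∃ C > 0, ∀ n, ‖dirichletSection lam a z n‖ ≤ C * exp (lam n * θ) := fun θ hθ =>
    norm_dirichletSection_le_of_tendsto hlam.monotone ((le_max_left _ _).trans hθ.le)
      (hconv _ (by
        simp only [Complex.add_re, Complex.ofReal_re]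
        linarith [le_max_right 0 (σc - z.re)]))
  obtain ⟨C, hC, hC'⟩ := hbound (θ₀ + 1) (by linarith)
  have hbdd := isBoundedUnder_norm_rpow hlam' hC hC'
  rw [show max 1 (exp (σc - z.re)) = exp θ₀ by rw [exp_monotone.map_max, exp_zero]]
  apply le_antisymm
  · refine ge_of_tendsto (continuous_exp.continuousWithinAt (s := Set.Ioi θ₀)).tendsto ?_
    filter_upwards [self_mem_nhdsWithin] with θ hθ
    obtain ⟨C, hC, hC'⟩ := hbound θ hθ
    exact limsup_norm_rpow_le_exp hlam' hC hC'
  · refine le_of_tendsto (continuous_exp.continuousWithinAt (s := Set.Iio θ₀)).tendsto ?_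
    filter_upwards [self_mem_nhdsWithin] with θ (hθ : θ < θ₀)
    by_contra! hlt
    rcases le_or_gt θ 0 with hθ0 | hθ0
    · exact hlt.not_ge ((exp_le_one_iff.2 hθ0).trans (one_le_limsup_norm_rpow hlam' hbdd hz))
    · have hθσ : θ < σc - z.re := (lt_max_iff.1 hθ).resolve_left hθ0.not_gt
      refine hdiv (z + ((θ + (σc - z.re)) / 2 : ℝ))
        (by simp only [Complex.add_re, Complex.ofReal_re]; linarith) ?_
      exact exists_tendsto_dirichletSection_of_norm_le hlam.monotone hlam' hθ0.le (by linarith)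
        (eventually_norm_le_exp_of_limsup_lt hlam' hbdd hlt)
end

section
/- Let (a_n)_{n≥0} be complex coefficients such that ρ^{-1} := limsup_{n→∞} (e/(2n)) |a_n|^{1/n} satisfies 0 < ρ^{-1} < ∞, and let f_n(z) := Σ_{k=0}^n a_k J_k(z) be the sections of the Neumann series Σ_{n=0}^∞ a_n J_n(z). Then for every z ∈ ℂ such that f_n(z) does not tend to 0 as n → ∞, one has limsup_{n→∞} |f_n(z)|^{1/n} = max(1, |z|/ρ). -/
open Filter Topology

/-- Bessel function of the first kind of integer order `n`, defined by its power series. -/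
noncomputable def besselJ (n : ℕ) (z : ℂ) : ℂ :=
  ∑' k : ℕ, ((-1 : ℂ) ^ k / ((k.factorial : ℂ) * ((n + k).factorial : ℂ))) * (z / 2) ^ (n + 2 * k)

/-!
The leading term of the Bessel series gives `J_n(z) = (z/2)^n / n! * (1 + O(1/n))`, and with
Stirling's formula `(n!)^(1/n) ~ n/e` this yields `(2n/e) |J_n(z)|^(1/n) → |z|`. Hence the
`n`-th roots of the terms `a_n J_n(z)` have limsup `|z|/ρ`. For the partial sums `f_n` of any
series whose terms have root-limsup `R`, geometric domination bounds the root-limsup of `f_n` by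
`max 1 R`. Conversely, `|f_n| ≤ q^n` eventually with `q < 1` would force `f_n → 0`, and with
`1 ≤ q < R` it would bound every term `f_n - f_(n-1)` by `2 q^n`, against their growth rate `R`.
-/

open Finset Nat

lemma eventually_const_mul_pow_lt_pow (c : ℝ) {p q : ℝ} (hp : 0 ≤ p) (hpq : p < q) :
    ∀ᶠ n in atTop, c * p ^ n < q ^ n := by
  have hq : 0 < q := hp.trans_lt hpq
  have h := (tendsto_pow_atTop_nhds_zero_of_lt_one (div_nonneg hp hq.le)
    ((div_lt_one hq).2 hpq)).const_mul c
  filter_upwards [h.eventually_lt_const (by rw [mul_zero]; exact one_pos)] with n hn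
  rwa [div_pow, mul_div_assoc', div_lt_one (by positivity)] at hn

lemma tendsto_rpow_inv_natCast_of_tendsto {c : ℕ → ℝ} {a : ℝ} (hc : Tendsto c atTop (𝓝 a))
    (ha : a ≠ 0) : Tendsto (fun n : ℕ => c n ^ (n : ℝ)⁻¹) atTop (𝓝 1) := by
  simpa using hc.rpow (tendsto_inv_atTop_zero.comp tendsto_natCast_atTop_atTop) (Or.inl ha)

lemma tendsto_factorial_rpow_inv_mul_exp_div :
    Tendsto (fun n : ℕ => (n ! : ℝ) ^ (n : ℝ)⁻¹ * Real.exp 1 / n) atTop (𝓝 1) := by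
  have hS := tendsto_rpow_inv_natCast_of_tendsto Stirling.tendsto_stirlingSeq_sqrt_pi
    (by positivity)
  have hsqrt : Tendsto (fun n : ℕ => (2 * n : ℝ) ^ (1 / (2 * n : ℝ))) atTop (𝓝 1) :=
    tendsto_rpow_div.comp (tendsto_natCast_atTop_atTop.const_mul_atTop two_pos)
  have hlim : Tendsto (fun n : ℕ => Stirling.stirlingSeq n ^ (n : ℝ)⁻¹ *
      (2 * n : ℝ) ^ (1 / (2 * n : ℝ))) atTop (𝓝 1) := by simpa using hS.mul hsqrt
  refine hlim.congr' ?_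
  filter_upwards [eventually_ne_atTop 0] with n hn
  rw [Stirling.stirlingSeq, Real.div_rpow (by positivity) (by positivity),
    Real.mul_rpow (by positivity) (by positivity), Real.pow_rpow_inv_natCast (by positivity) hn,
    Real.sqrt_eq_rpow, ← Real.rpow_mul (by positivity)]
  field_simp

section RootTest

variable {E : Type*} [SeminormedAddCommGroup E] {x : ℕ → E} {q : ℝ}

lemma eventually_norm_le_pow_of_limsup_root_lt
    (hb : IsBoundedUnder (· ≤ ·) atTop fun n : ℕ => ‖x n‖ ^ (n : ℝ)⁻¹)
    (hq : limsup (fun n : ℕ => ‖x n‖ ^ (n : ℝ)⁻¹) atTop < q) :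
    ∀ᶠ n in atTop, ‖x n‖ ≤ q ^ n := by
  filter_upwards [eventually_lt_of_limsup_lt hq hb, eventually_ne_atTop 0] with n hn hn0
  calc ‖x n‖ = (‖x n‖ ^ (n : ℝ)⁻¹) ^ n := (Real.rpow_inv_natCast_pow (norm_nonneg _) hn0).symm
    _ ≤ q ^ n := pow_le_pow_left₀ (by positivity) hn.le n

lemma frequently_pow_le_norm_of_lt_limsup_root (hq0 : 0 ≤ q)
    (hq : q < limsup (fun n : ℕ => ‖x n‖ ^ (n : ℝ)⁻¹) atTop) :
    ∃ᶠ n in atTop, q ^ n ≤ ‖x n‖ := by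
  have hcob : IsCoboundedUnder (· ≤ ·) atTop fun n : ℕ => ‖x n‖ ^ (n : ℝ)⁻¹ :=
    isCoboundedUnder_le_of_le atTop fun n => by positivity
  refine ((frequently_lt_of_lt_limsup hcob hq).and_eventually (eventually_ne_atTop 0)).mono ?_
  rintro n ⟨hn, hn0⟩
  calc q ^ n ≤ (‖x n‖ ^ (n : ℝ)⁻¹) ^ n := pow_le_pow_left₀ hq0 hn.le n
    _ = ‖x n‖ := Real.rpow_inv_natCast_pow (norm_nonneg _) hn0

lemma limsup_root_eq_of_pow_bounds {L : ℝ} (hL : 0 ≤ L)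
    (hup : ∀ q, L < q → ∀ᶠ n in atTop, ‖x n‖ ≤ q ^ n)
    (hlow : ∀ q, 0 ≤ q → q < L → ∃ᶠ n in atTop, q ^ n ≤ ‖x n‖) :
    limsup (fun n : ℕ => ‖x n‖ ^ (n : ℝ)⁻¹) atTop = L := by
  have root_le (q : ℝ) (hq : L < q) : ∀ᶠ n : ℕ in atTop, ‖x n‖ ^ (n : ℝ)⁻¹ ≤ q := by
    filter_upwards [hup q hq, eventually_ne_atTop 0] with n hn hn0
    rw [Real.rpow_inv_le_iff_of_pos (norm_nonneg _) (by linarith) (by positivity)]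
    exact_mod_cast hn
  have le_root (q : ℝ) (hq : q < L) : ∃ᶠ n : ℕ in atTop, q ≤ ‖x n‖ ^ (n : ℝ)⁻¹ := by
    rcases lt_or_ge q 0 with hq0 | hq0
    · exact Frequently.of_forall fun n => hq0.le.trans (by positivity)
    refine ((hlow q hq0 hq).and_eventually (eventually_ne_atTop 0)).mono ?_
    rintro n ⟨hn, hn0⟩
    rw [Real.le_rpow_inv_iff_of_pos hq0 (norm_nonneg _) (by positivity)]
    exact_mod_cast hn
  have hb := isBoundedUnder_of_eventually_le (root_le _ (lt_add_one L))
  have hcob : IsCoboundedUnder (· ≤ ·) atTop fun n : ℕ => ‖x n‖ ^ (n : ℝ)⁻¹ :=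
    isCoboundedUnder_le_of_le atTop fun n => by positivity
  exact le_antisymm
    (le_of_forall_gt_imp_ge_of_dense fun q hq => limsup_le_of_le hcob (root_le q hq))
    (le_of_forall_lt_imp_le_of_dense fun q hq => le_limsup_of_frequently_le (le_root q hq) hb)

end RootTest

section PartialSums

variable {E : Type*} [SeminormedAddCommGroup E] (t : ℕ → E)

lemma eventually_norm_partialSum_lt_pow {p q : ℝ} (hp : 1 < p) (hpq : p < q)
    (ht : ∀ᶠ n in atTop, ‖t n‖ ≤ p ^ n) :
    ∀ᶠ n in atTop, ‖∑ k ∈ range (n + 1), t k‖ < q ^ n := by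
  obtain ⟨N, hN⟩ := eventually_atTop.1 ht
  set C := 1 + ∑ k ∈ range N, ‖t k‖ with hC
  have hC1 : 1 ≤ C := by
    simpa [hC] using sum_nonneg fun k (_ : k ∈ range N) => norm_nonneg (t k)
  have hterm (k : ℕ) : ‖t k‖ ≤ C * p ^ k := by
    have hpk : 1 ≤ p ^ k := one_le_pow₀ hp.le
    rcases lt_or_ge k N with hk | hk
    · calc ‖t k‖ ≤ ∑ k ∈ range N, ‖t k‖ :=
            single_le_sum (fun _ _ => norm_nonneg _) (mem_range.2 hk)
        _ ≤ C := by rw [hC]; linarith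
        _ ≤ C * p ^ k := le_mul_of_one_le_right (by linarith) hpk
    · exact (hN k hk).trans (le_mul_of_one_le_left (by linarith) hC1)
  have hsum (n : ℕ) : ‖∑ k ∈ range (n + 1), t k‖ ≤ C * p / (p - 1) * p ^ n := by
    calc ‖∑ k ∈ range (n + 1), t k‖ ≤ ∑ k ∈ range (n + 1), C * p ^ k :=
          (norm_sum_le _ _).trans (sum_le_sum fun k _ => hterm k)
      _ = C * ((p ^ (n + 1) - 1) / (p - 1)) := by rw [← mul_sum, geom_sum_eq hp.ne']
      _ ≤ C * p / (p - 1) * p ^ n := by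
          have : 0 < p - 1 := by linarith
          have : 0 < C := by positivity
          rw [pow_succ]
          field_simp
          nlinarith
  filter_upwards [eventually_const_mul_pow_lt_pow (C * p / (p - 1)) (by linarith) hpq] with n hn
  exact (hsum n).trans_lt hn

lemma eventually_norm_le_two_mul_pow_of_partialSum {q : ℝ} (hq : 1 ≤ q)
    (hS : ∀ᶠ n in atTop, ‖∑ k ∈ range (n + 1), t k‖ ≤ q ^ n) :
    ∀ᶠ n in atTop, ‖t n‖ ≤ 2 * q ^ n := by
  filter_upwards [hS, (tendsto_sub_atTop_nat 1).eventually hS, eventually_ne_atTop 0]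
    with n hn hn' hn0
  obtain ⟨m, rfl⟩ := Nat.exists_eq_succ_of_ne_zero hn0
  have ht : t (m + 1) = ∑ k ∈ range (m + 1 + 1), t k - ∑ k ∈ range (m + 1), t k := by
    rw [sum_range_succ _ (m + 1), add_sub_cancel_left]
  simp only [Nat.succ_eq_add_one, Nat.add_sub_cancel] at hn'
  calc ‖t (m + 1)‖ ≤ q ^ (m + 1) + q ^ m := ht ▸ (norm_sub_le _ _).trans (add_le_add hn hn')
    _ ≤ 2 * q ^ (m + 1) := by
        rw [pow_succ]; nlinarith [one_le_pow₀ (M₀ := ℝ) hq (n := m)]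

theorem limsup_root_norm_partialSum_eq {R : ℝ}
    (hb : IsBoundedUnder (· ≤ ·) atTop fun n : ℕ => ‖t n‖ ^ (n : ℝ)⁻¹)
    (ht : limsup (fun n : ℕ => ‖t n‖ ^ (n : ℝ)⁻¹) atTop = R)
    (hS : ¬Tendsto (fun n => ∑ k ∈ range (n + 1), t k) atTop (𝓝 0)) :
    limsup (fun n : ℕ => ‖∑ k ∈ range (n + 1), t k‖ ^ (n : ℝ)⁻¹) atTop = max 1 R := by
  refine limsup_root_eq_of_pow_bounds (zero_le_one.trans (le_max_left _ _)) (fun q hq => ?_)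
    (fun q hq0 hq => ?_)
  · have h1 : 1 < (max 1 R + q) / 2 := by linarith [le_max_left 1 R]
    have hR : R < (max 1 R + q) / 2 := by linarith [le_max_right 1 R]
    exact (eventually_norm_partialSum_lt_pow t h1 (by linarith)
      (eventually_norm_le_pow_of_limsup_root_lt hb (ht ▸ hR))).mono fun n hn => hn.le
  · by_contra h
    have hSq : ∀ᶠ n in atTop, ‖∑ k ∈ range (n + 1), t k‖ ≤ q ^ n :=
      (not_frequently.1 h).mono fun n hn => (not_le.1 hn).le
    rcases lt_or_ge q 1 with hq1 | hq1
    · exact hS (squeeze_zero_norm' hSq (tendsto_pow_atTop_nhds_zero_of_lt_one hq0 hq1))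
    have hqR : q < R := (lt_max_iff.1 hq).resolve_left hq1.not_gt
    obtain ⟨n, hpn, htn, hqn⟩ := ((frequently_pow_le_norm_of_lt_limsup_root (x := t)
      (q := (q + R) / 2) (by linarith) (by linarith)).and_eventually
      ((eventually_norm_le_two_mul_pow_of_partialSum t hq1 hSq).and
      (eventually_const_mul_pow_lt_pow 2 hq0 (by linarith : q < (q + R) / 2)))).exists
    linarith

end PartialSums

noncomputable def besselJTerm (n : ℕ) (z : ℂ) (k : ℕ) : ℂ :=
  (-1) ^ k / (k ! * (n + k)! : ℂ) * (z / 2) ^ (n + 2 * k)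

lemma norm_besselJTerm_succ_le (n k : ℕ) (z : ℂ) :
    ‖besselJTerm n z (k + 1)‖ ≤
      (‖z‖ / 2) ^ n / (n + 1)! * ((‖z‖ ^ 2 / 4) ^ (k + 1) / (k + 1)!) := by
  have hfac : ((n + 1)! : ℝ) ≤ (n + (k + 1))! := by
    exact_mod_cast factorial_le (by omega)
  have hpow : (‖z‖ / 2) ^ (n + 2 * (k + 1)) = (‖z‖ / 2) ^ n * (‖z‖ ^ 2 / 4) ^ (k + 1) := by
    rw [pow_add, pow_mul]; norm_num [div_pow]
  rw [besselJTerm, norm_mul, norm_div, norm_pow, norm_pow, norm_neg, norm_one, one_pow, norm_div,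
    norm_mul, Complex.norm_natCast, Complex.norm_natCast, Complex.norm_two, hpow]
  calc _ = (‖z‖ / 2) ^ n * (‖z‖ ^ 2 / 4) ^ (k + 1) / ((k + 1)! * (n + (k + 1))!) := by ring
    _ ≤ (‖z‖ / 2) ^ n * (‖z‖ ^ 2 / 4) ^ (k + 1) / ((k + 1)! * (n + 1)!) := by gcongr
    _ = _ := by ring

lemma sum_range_norm_besselJTerm_succ_le (n m : ℕ) (z : ℂ) :
    ∑ k ∈ range m, ‖besselJTerm n z (k + 1)‖ ≤
      (‖z‖ / 2) ^ n / (n + 1)! * Real.exp (‖z‖ ^ 2 / 4) := by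
  set x := ‖z‖ ^ 2 / 4
  calc ∑ k ∈ range m, ‖besselJTerm n z (k + 1)‖
      ≤ (‖z‖ / 2) ^ n / (n + 1)! * ∑ k ∈ range m, x ^ (k + 1) / (k + 1)! := by
        rw [mul_sum]; exact sum_le_sum fun k _ => norm_besselJTerm_succ_le n k z
    _ ≤ (‖z‖ / 2) ^ n / (n + 1)! * ∑ k ∈ range (m + 1), x ^ k / k ! := by
        rw [sum_range_succ' _ m]
        gcongr
        simp
    _ ≤ _ := by gcongr; exact Real.sum_le_exp_of_nonneg (by positivity) _

lemma norm_besselJ_sub_leadingTerm_le (n : ℕ) (z : ℂ) :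
    ‖besselJ n z - (z / 2) ^ n / (n ! : ℂ)‖ ≤
      (‖z‖ / 2) ^ n / (n + 1)! * Real.exp (‖z‖ ^ 2 / 4) := by
  have hs : Summable fun k => ‖besselJTerm n z (k + 1)‖ :=
    summable_of_sum_range_le (fun _ => norm_nonneg _) (sum_range_norm_besselJTerm_succ_le n · z)
  have hJ : besselJ n z = ∑' k, besselJTerm n z k := rfl
  rw [hJ, ((summable_nat_add_iff 1).1 hs.of_norm).tsum_eq_zero_add]
  have h0 : besselJTerm n z 0 = (z / 2) ^ n / (n ! : ℂ) := by simp [besselJTerm, inv_mul_eq_div]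
  rw [h0, add_sub_cancel_left]
  exact (norm_tsum_le_tsum_norm hs).trans (Real.tsum_le_of_sum_range_le (fun _ => norm_nonneg _)
    (sum_range_norm_besselJTerm_succ_le n · z))

lemma tendsto_norm_besselJ_div_leadingTerm {z : ℂ} (hz : z ≠ 0) :
    Tendsto (fun n : ℕ => ‖besselJ n z‖ / ((‖z‖ / 2) ^ n / n !)) atTop (𝓝 1) := by
  have hbound (n : ℕ) : dist (‖besselJ n z‖ / ((‖z‖ / 2) ^ n / n !)) 1
      ≤ Real.exp (‖z‖ ^ 2 / 4) / ((n + 1 : ℕ) : ℝ) := by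
    have hA : 0 < (‖z‖ / 2) ^ n / n ! := by positivity
    have hnorm : ‖(z / 2) ^ n / (n ! : ℂ)‖ = (‖z‖ / 2) ^ n / n ! := by simp
    rw [Real.dist_eq, div_sub_one hA.ne', abs_div, abs_of_pos hA, div_le_iff₀ hA, ← hnorm]
    calc |‖besselJ n z‖ - ‖(z / 2) ^ n / (n ! : ℂ)‖| ≤ ‖besselJ n z - (z / 2) ^ n / (n ! : ℂ)‖ :=
          abs_norm_sub_norm_le _ _
      _ ≤ _ := norm_besselJ_sub_leadingTerm_le n z
      _ = _ := by rw [hnorm, factorial_succ]; push_cast; field_simp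
  exact tendsto_iff_dist_tendsto_zero.2 (squeeze_zero (fun _ => dist_nonneg) hbound
    ((tendsto_const_div_atTop_nhds_zero_nat _).comp (tendsto_add_atTop_nat 1)))

lemma tendsto_besselJ_root (z : ℂ) :
    Tendsto (fun n : ℕ => 2 * n / Real.exp 1 * ‖besselJ n z‖ ^ (n : ℝ)⁻¹) atTop (𝓝 ‖z‖) := by
  rcases eq_or_ne z 0 with rfl | hz
  · refine tendsto_const_nhds.congr' ?_
    filter_upwards [eventually_ne_atTop 0] with n hn
    have hJ : besselJ n 0 = 0 := by simp [besselJ, hn]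
    simp [hJ, Real.zero_rpow (inv_ne_zero (cast_ne_zero.2 hn))]
  have hlim := (tendsto_rpow_inv_natCast_of_tendsto (tendsto_norm_besselJ_div_leadingTerm hz)
    one_ne_zero).mul ((tendsto_const_nhds (x := ‖z‖)).div tendsto_factorial_rpow_inv_mul_exp_div
      one_ne_zero)
  rw [one_mul, div_one] at hlim
  refine hlim.congr' ?_
  filter_upwards [eventually_ne_atTop 0] with n hn
  simp only [Pi.div_apply]
  rw [Real.div_rpow (norm_nonneg _) (by positivity), Real.div_rpow (by positivity) (by positivity),
    Real.pow_rpow_inv_natCast (by positivity) hn]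
  field_simp

lemma limsup_mul_eq_of_tendsto {ι : Type*} {f : Filter ι} [f.NeBot] {u v : ι → ℝ} {c : ℝ}
    (hu0 : 0 ≤ u) (hu : IsBoundedUnder (· ≤ ·) f u) (hv0 : 0 ≤ v) (hv : Tendsto v f (𝓝 c)) :
    limsup (u * v) f = limsup u f * c := by
  have hfreq : ∃ᶠ x in f, 0 ≤ u x := Frequently.of_forall hu0
  refine le_antisymm ?_ ?_
  · simpa [hv.limsup_eq] using
      limsup_mul_le hfreq hu (Eventually.of_forall hv0) hv.isBoundedUnder_le
  · simpa [hv.liminf_eq] using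
      le_limsup_mul hfreq hu (Eventually.of_forall hv0) hv.isBoundedUnder_le

/-- growth function of the sections of a Neumann series with convergence level
`ρ`, `0 < ρ⁻¹ < ∞`: if `f n z` does not tend to `0`, then
`limsup |f n z|^(1/n) = max 1 (|z|/ρ)`. -/
theorem stmt_8
    (a : ℕ → ℂ) (ρ : ℝ) (hρ : 0 < ρ)
    (hcc : limsup (fun n : ℕ =>
        (Real.exp 1 / (2 * n)) * ‖a n‖ ^ ((n : ℝ)⁻¹)) atTop = ρ⁻¹)
    (z : ℂ)
    (hz : ¬ Tendsto (fun n : ℕ => ∑ k ∈ Finset.range (n + 1), a k * besselJ k z)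
      atTop (𝓝 0)) :
    limsup (fun n : ℕ =>
        ‖∑ k ∈ Finset.range (n + 1), a k * besselJ k z‖ ^ ((n : ℝ)⁻¹)) atTop
      = max 1 (‖z‖ / ρ) := by
  set u : ℕ → ℝ := fun n => Real.exp 1 / (2 * n) * ‖a n‖ ^ (n : ℝ)⁻¹
  set v : ℕ → ℝ := fun n => 2 * n / Real.exp 1 * ‖besselJ n z‖ ^ (n : ℝ)⁻¹
  have hu0 : 0 ≤ u := fun n => by positivity
  have hv0 : 0 ≤ v := fun n => by positivity
  -- an unbounded real sequence has limsup `0`, which `hcc` excludes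
  have hu : IsBoundedUnder (· ≤ ·) atTop u := by
    by_contra h
    rw [Real.limsup_of_not_isBoundedUnder h] at hcc
    exact (inv_pos.2 hρ).ne hcc
  have hv : Tendsto v atTop (𝓝 ‖z‖) := tendsto_besselJ_root z
  have huv : (fun n : ℕ => ‖a n * besselJ n z‖ ^ (n : ℝ)⁻¹) =ᶠ[atTop] u * v := by
    filter_upwards [eventually_ne_atTop 0] with n hn
    simp only [Pi.mul_apply, u, v, norm_mul]
    rw [Real.mul_rpow (norm_nonneg _) (norm_nonneg _)]
    field_simp
  refine limsup_root_norm_partialSum_eq _ ?_ ?_ hz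
  · exact (isBoundedUnder_le_mul_of_nonneg (Frequently.of_forall hu0) hu
      (Eventually.of_forall hv0) hv.isBoundedUnder_le).mono_le huv.le
  · rw [limsup_congr huv, limsup_mul_eq_of_tendsto hu0 hu hv0 hv, hcc, div_eq_inv_mul]
end

section
/- The Kapteyn series Σ_{n=1}^∞ n^{−2} J_n(nz) converges absolutely and uniformly on the set {z ∈ ℂ : Ω(z) ≤ 1}; in particular it converges at every point of S = {x ∈ ℝ : |x| ≥ 1}, even though its convergence level is ρ = 1 (that is, limsup_{n→∞} |n^{−2}|^{1/n} = 1). -/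
/-!
The heart of the matter is Kapteyn's inequality `‖J_n(n z)‖ ≤ Ω(z) ^ n`. Expanding the generating
function `exp (w/2 (ζ - ζ⁻¹))` as a double series and integrating termwise over `|ζ| = r` gives
`∮ exp (w/2 (ζ - ζ⁻¹)) ζ^(-n-1) dζ = 2πi J_n(w)`, hence `‖J_n(w)‖ ≤ e^K / r^n` as soon as
`Re (w/2 (ζ - ζ⁻¹)) ≤ K` on that circle. For `w = n z` take the circle through the saddle point
`(1 + s) / z`, where `s = √(1 - z²)`: on it `Re (z/2 (ζ - ζ⁻¹)) ≤ Re s`, and the resulting bound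
`(‖z‖ e^(Re s) / ‖1 + s‖) ^ n` is exactly `Ω(z) ^ n`. So on `{Ω ≤ 1}` the `n`-th term of the series
is at most `n⁻²`, and the Weierstrass M-test applies; `S` lies in `{Ω ≤ 1}` since `Re s = 0` there.
-/

open Filter Topology

/-- The Kapteyn height function `Ω(z) = |z exp(√(1-z²)) / (1 + √(1-z²))|`, with the principal
branch of the square root. -/
noncomputable def Omega (z : ℂ) : ℝ :=
  ‖z * Complex.exp ((1 - z ^ 2) ^ ((1 : ℂ) / 2)) /
    (1 + (1 - z ^ 2) ^ ((1 : ℂ) / 2))‖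

/-- The exceptional set `S = {x ∈ ℝ : |x| ≥ 1}` regarded as a subset of `ℂ`. -/
def SlitSet : Set ℂ := {z : ℂ | z.im = 0 ∧ 1 ≤ |z.re|}

open Complex Metric MeasureTheory
open scoped Nat Real ComplexConjugate

theorem hasSum_circleIntegral_of_norm_le {ι E : Type*} [Countable ι] [NormedAddCommGroup E]
    [NormedSpace ℂ E] {F : ι → ℂ → E} {f : ℂ → E} {c : ℂ} {R : ℝ} {u : ι → ℝ}
    (hF : ∀ i, CircleIntegrable (F i) c R) (hFu : ∀ i, ∀ z ∈ sphere c |R|, ‖F i z‖ ≤ u i)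
    (hu : Summable u) (hFf : ∀ z ∈ sphere c |R|, HasSum (fun i => F i z) (f z)) :
    HasSum (fun i => ∮ z in C(c, R), F i z) (∮ z in C(c, R), f z) := by
  refine intervalIntegral.hasSum_integral_of_dominated_convergence (fun i _ => |R| * u i)
    (fun i => (hF i).out.def'.aestronglyMeasurable) (fun i => ae_of_all _ fun θ _ => ?_)
    (ae_of_all _ fun _ _ => hu.mul_left _) intervalIntegrable_const
    (ae_of_all _ fun θ _ => (hFf _ (circleMap_mem_sphere' c R θ)).const_smul _)
  simpa [norm_smul] using
    mul_le_mul_of_nonneg_left (hFu i _ (circleMap_mem_sphere' c R θ)) (abs_nonneg R)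

theorem circleIntegral_zpow (m : ℤ) {R : ℝ} (hR : R ≠ 0) :
    (∮ z in C(0, R), z ^ m) = if m = -1 then 2 * π * I else 0 := by
  split_ifs with hm
  · simpa [hm] using circleIntegral.integral_sub_center_inv 0 hR
  · simpa using circleIntegral.integral_sub_zpow_of_ne hm 0 0 R

theorem Complex.hasSum_pow_div_factorial (x : ℂ) :
    HasSum (fun p : ℕ => x ^ p / (p ! : ℂ)) (exp x) :=
  exp_eq_exp_ℂ ▸ NormedSpace.expSeries_div_hasSum_exp x

theorem Complex.summable_norm_pow_div_factorial (x : ℂ) :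
    Summable fun p : ℕ => ‖x ^ p / (p ! : ℂ)‖ :=
  (Real.summable_pow_div_factorial ‖x‖).congr fun p => by
    rw [_root_.norm_div, _root_.norm_pow, Complex.norm_natCast]

theorem Complex.hasSum_exp_add (A B : ℂ) :
    HasSum (fun pq : ℕ × ℕ => A ^ pq.1 / (pq.1 ! : ℂ) * (B ^ pq.2 / (pq.2 ! : ℂ)))
      (exp (A + B)) := by
  have hAB := summable_mul_of_summable_norm (R := ℂ) (summable_norm_pow_div_factorial A)
    (summable_norm_pow_div_factorial B)
  have h := (hasSum_pow_div_factorial A).mul (hasSum_pow_div_factorial B) hAB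
  rw [exp_add]
  exact h

noncomputable def besselLaurentTerm (n : ℕ) (w : ℂ) (pq : ℕ × ℕ) (ζ : ℂ) : ℂ :=
  (w / 2 * ζ) ^ pq.1 / (pq.1 ! : ℂ) * ((-w / 2 * ζ⁻¹) ^ pq.2 / (pq.2 ! : ℂ)) * ζ⁻¹ ^ (n + 1)

theorem hasSum_besselLaurentTerm (n : ℕ) (w ζ : ℂ) :
    HasSum (fun pq => besselLaurentTerm n w pq ζ) (exp (w / 2 * (ζ - ζ⁻¹)) * ζ⁻¹ ^ (n + 1)) := by
  have h := (Complex.hasSum_exp_add (w / 2 * ζ) (-w / 2 * ζ⁻¹)).mul_right (ζ⁻¹ ^ (n + 1))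
  rwa [show w / 2 * ζ + -w / 2 * ζ⁻¹ = w / 2 * (ζ - ζ⁻¹) by ring] at h

theorem norm_besselLaurentTerm_eq {ζ ζ' : ℂ} (h : ‖ζ‖ = ‖ζ'‖) (n : ℕ) (w : ℂ) (pq : ℕ × ℕ) :
    ‖besselLaurentTerm n w pq ζ‖ = ‖besselLaurentTerm n w pq ζ'‖ := by
  simp only [besselLaurentTerm, norm_mul, norm_div, norm_pow, norm_inv, h]

theorem summable_norm_besselLaurentTerm (n : ℕ) (w ζ : ℂ) :
    Summable fun pq => ‖besselLaurentTerm n w pq ζ‖ := by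
  have h := ((Complex.summable_norm_pow_div_factorial (w / 2 * ζ)).mul_norm
    (Complex.summable_norm_pow_div_factorial (-w / 2 * ζ⁻¹))).mul_right ‖ζ⁻¹ ^ (n + 1)‖
  simpa only [besselLaurentTerm, norm_mul] using h

theorem circleIntegral_besselLaurentTerm (n : ℕ) (w : ℂ) (pq : ℕ × ℕ) {r : ℝ} (hr : 0 < r) :
    (∮ ζ in C(0, r), besselLaurentTerm n w pq ζ) =
      if pq.1 = pq.2 + n then 2 * π * I * ((w / 2) ^ pq.1 / pq.1 ! * ((-w / 2) ^ pq.2 / pq.2 !))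
      else 0 := by
  have h (ζ : ℂ) (hζ : ζ ∈ sphere (0 : ℂ) r) : besselLaurentTerm n w pq ζ =
      (w / 2) ^ pq.1 / pq.1 ! * ((-w / 2) ^ pq.2 / pq.2 !) * ζ ^ ((pq.1 : ℤ) - pq.2 - n - 1) := by
    have hζ0 : ζ ≠ 0 := ne_of_mem_sphere hζ hr.ne'
    rw [show (pq.1 : ℤ) - pq.2 - n - 1 = pq.1 - pq.2 - (n + 1 : ℕ) by push_cast; ring,
      zpow_sub₀ hζ0, zpow_sub₀ hζ0]
    simp only [besselLaurentTerm, zpow_natCast, mul_pow, inv_pow]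
    ring
  rw [circleIntegral.integral_congr hr.le h, circleIntegral.integral_const_mul,
    circleIntegral_zpow _ hr.ne']
  by_cases hpq : pq.1 = pq.2 + n
  · rw [if_pos (by omega), if_pos hpq, mul_comm]
  · rw [if_neg (by omega), if_neg hpq, mul_zero]

theorem circleIntegral_eq_two_pi_I_mul_besselJ (n : ℕ) (w : ℂ) {r : ℝ} (hr : 0 < r) :
    (∮ ζ in C(0, r), exp (w / 2 * (ζ - ζ⁻¹)) * ζ⁻¹ ^ (n + 1)) = 2 * π * I * besselJ n w := by
  have hsum := hasSum_circleIntegral_of_norm_le (c := 0) (R := r)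
    (u := fun pq => ‖besselLaurentTerm n w pq r‖)
    (fun pq => ContinuousOn.circleIntegrable hr.le ?_)
    (fun pq ζ hζ => (norm_besselLaurentTerm_eq (by simpa [abs_of_pos hr] using hζ) n w pq).le)
    (summable_norm_besselLaurentTerm n w r) fun ζ _ => hasSum_besselLaurentTerm n w ζ
  · rw [← (Function.Injective.hasSum_iff (g := fun q : ℕ => (q + n, q))
      (fun q q' h => congrArg Prod.snd h) fun pq hpq => ?_)] at hsum
    · rw [← hsum.tsum_eq, besselJ, ← tsum_mul_left]
      refine tsum_congr fun q => ?_
      rw [Function.comp_apply, circleIntegral_besselLaurentTerm n w _ hr, if_pos rfl]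
      simp only [Nat.add_comm q n, neg_div, neg_pow (w / 2)]
      ring
    · rw [circleIntegral_besselLaurentTerm n w _ hr, if_neg]
      exact fun h => hpq ⟨pq.2, Prod.ext h.symm rfl⟩
  · have hinv : ContinuousOn (fun ζ : ℂ => ζ⁻¹) (sphere 0 r) :=
      continuousOn_inv₀.mono fun ζ hζ => ne_of_mem_sphere hζ hr.ne'
    unfold besselLaurentTerm
    fun_prop

theorem norm_besselJ_le_of_re_le (n : ℕ) (w : ℂ) {r K : ℝ} (hr : 0 < r)
    (hK : ∀ ζ ∈ sphere (0 : ℂ) r, (w / 2 * (ζ - ζ⁻¹)).re ≤ K) :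
    ‖besselJ n w‖ ≤ Real.exp K / r ^ n := by
  have h := circleIntegral.norm_integral_le_of_norm_le_const hr.le
    (f := fun ζ => exp (w / 2 * (ζ - ζ⁻¹)) * ζ⁻¹ ^ (n + 1)) (C := Real.exp K * r⁻¹ ^ (n + 1))
    fun ζ hζ => by
      rw [mem_sphere_zero_iff_norm] at hζ
      rw [norm_mul, norm_exp, norm_pow, norm_inv, hζ]
      gcongr
      exact hK ζ (mem_sphere_zero_iff_norm.2 hζ)
  rw [circleIntegral_eq_two_pi_I_mul_besselJ n w hr, norm_mul, norm_mul, norm_mul, norm_I, mul_one,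
    Complex.norm_ofNat, Complex.norm_real, Real.norm_of_nonneg Real.pi_pos.le] at h
  calc ‖besselJ n w‖ ≤ r * (Real.exp K * r⁻¹ ^ (n + 1)) :=
        le_of_mul_le_mul_left (by rwa [mul_assoc (2 * π)] at h) Real.two_pi_pos
    _ = Real.exp K / r ^ n := by rw [inv_pow, pow_succ]; field_simp

theorem one_add_ne_zero_of_sq_eq_one_sub_sq {z s : ℂ} (hz : z ≠ 0) (hs : s ^ 2 = 1 - z ^ 2) :
    1 + s ≠ 0 := by
  intro h
  rw [show s = -1 by linear_combination h] at hs
  exact hz (pow_eq_zero_iff two_ne_zero |>.1 (by linear_combination hs))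

theorem re_half_mul_sub_inv_le {z s ζ : ℂ} (hz : z ≠ 0) (hs : s ^ 2 = 1 - z ^ 2)
    (hζ : ‖ζ‖ = ‖1 + s‖ / ‖z‖) : (z / 2 * (ζ - ζ⁻¹)).re ≤ |s.re| := by
  have h1s := one_add_ne_zero_of_sq_eq_one_sub_sq hz hs
  -- Write `ζ = (1 + s) / z * e` with `‖e‖ = 1`; as `z² = (1 + s)(1 - s)`, the exponent becomes
  -- `((1 + s) e - (1 - s) ē) / 2`, whose real part is `Re s * Re e`.
  set e := ζ * z / (1 + s) with he_def
  have he : ‖e‖ = 1 := by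
    rw [he_def, norm_div, norm_mul, hζ, div_mul_cancel₀ _ (norm_ne_zero_iff.2 hz),
      div_self (norm_ne_zero_iff.2 h1s)]
  have he0 : e ≠ 0 := norm_ne_zero_iff.1 (by rw [he]; exact one_ne_zero)
  have hζe : ζ = (1 + s) / z * e := by rw [he_def]; field_simp
  clear_value e
  have he_inv : e⁻¹ = conj e := by
    rw [inv_def, normSq_eq_norm_sq, he]; simp
  have key : z / 2 * (ζ - ζ⁻¹) = ((1 + s) * e - (1 - s) * conj e) / 2 := by
    rw [← he_inv, hζe]
    field_simp
    linear_combination -hs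
  have hre : (z / 2 * (ζ - ζ⁻¹)).re = s.re * e.re := by
    rw [key]
    simp only [div_ofNat_re, sub_re, mul_re, add_re, one_re, add_im, one_im, conj_re, sub_im,
      conj_im]
    ring
  rw [hre]
  calc s.re * e.re ≤ |s.re * e.re| := le_abs_self _
    _ = |s.re| * |e.re| := abs_mul _ _
    _ ≤ |s.re| * 1 := by gcongr; exact (abs_re_le_norm e).trans he.le
    _ = |s.re| := mul_one _

theorem norm_besselJ_nat_mul_le {z s : ℂ} (hz : z ≠ 0) (hs : s ^ 2 = 1 - z ^ 2) (n : ℕ) :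
    ‖besselJ n (n * z)‖ ≤ (‖z‖ * Real.exp |s.re| / ‖1 + s‖) ^ n := by
  have hr : 0 < ‖1 + s‖ / ‖z‖ :=
    div_pos (norm_pos_iff.2 (one_add_ne_zero_of_sq_eq_one_sub_sq hz hs)) (norm_pos_iff.2 hz)
  have h := norm_besselJ_le_of_re_le n (n * z) hr (K := n * |s.re|) fun ζ hζ => by
    rw [mul_div_assoc, mul_assoc, ← ofReal_natCast, re_ofReal_mul]
    exact mul_le_mul_of_nonneg_left
      (re_half_mul_sub_inv_le hz hs (mem_sphere_zero_iff_norm.1 hζ)) n.cast_nonneg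
  rwa [Real.exp_nat_mul, ← div_pow, div_div_eq_mul_div, mul_comm (Real.exp _)] at h

theorem besselJ_apply_zero {n : ℕ} (hn : n ≠ 0) : besselJ n 0 = 0 := by
  rw [besselJ, zero_div]
  convert tsum_zero with k
  rw [zero_pow (by omega), mul_zero]

theorem sq_cpow_one_half (x : ℂ) : (x ^ (1 / 2 : ℂ)) ^ 2 = x := by
  rw [one_div, cpow_ofNat_inv_pow]

theorem re_cpow_one_half_nonneg (x : ℂ) : 0 ≤ (x ^ (1 / 2 : ℂ)).re := by
  rw [one_div, cpow_inv_two_re]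
  exact Real.sqrt_nonneg _

theorem Omega_eq (z : ℂ) :
    Omega z =
      ‖z‖ * Real.exp |((1 - z ^ 2) ^ (1 / 2 : ℂ)).re| / ‖1 + (1 - z ^ 2) ^ (1 / 2 : ℂ)‖ := by
  rw [Omega, norm_div, norm_mul, norm_exp, abs_of_nonneg (re_cpow_one_half_nonneg _)]

theorem norm_besselJ_nat_mul_le_Omega_pow (z : ℂ) {n : ℕ} (hn : n ≠ 0) :
    ‖besselJ n (n * z)‖ ≤ Omega z ^ n := by
  rcases eq_or_ne z 0 with rfl | hz
  · rw [mul_zero, besselJ_apply_zero hn, norm_zero]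
    exact pow_nonneg (norm_nonneg _) n
  · rw [Omega_eq]
    exact norm_besselJ_nat_mul_le hz (sq_cpow_one_half _) n

theorem Omega_eq_one_of_mem_SlitSet {z : ℂ} (hz : z ∈ SlitSet) : Omega z = 1 := by
  obtain ⟨him, hre⟩ := hz
  set s := (1 - z ^ 2) ^ (1 / 2 : ℂ) with hs_def
  have hs : s ^ 2 = 1 - z ^ 2 := sq_cpow_one_half _
  have hz_sq : 1 - z ^ 2 = ((1 - z.re ^ 2 : ℝ) : ℂ) := by
    apply Complex.ext <;> simp [pow_two, him]
  have hsre : s.re = 0 := by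
    rw [hs_def, one_div, cpow_inv_two_re, hz_sq, norm_real, Real.norm_eq_abs, ofReal_re,
      abs_of_nonpos (by nlinarith [sq_abs z.re, abs_nonneg z.re])]
    simp
  have hz0 : z ≠ 0 := by
    rintro rfl
    norm_num at hre
  have h1s : ‖1 + s‖ = ‖z‖ := by
    rw [← sq_eq_sq₀ (norm_nonneg _) (norm_nonneg _), Complex.sq_norm, Complex.sq_norm, normSq_apply,
      normSq_apply]
    have := congrArg re hs
    simp only [pow_two, mul_re, hsre, sub_re, one_re, him, add_re, add_im, one_im] at this ⊢
    linarith
  rw [Omega_eq, ← hs_def, hsre, abs_zero, Real.exp_zero, mul_one, h1s,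
    div_self (norm_ne_zero_iff.2 hz0)]

theorem norm_inv_sq_mul_besselJ_nat_mul_le {z : ℂ} (hz : Omega z ≤ 1) (n : ℕ) :
    ‖((n : ℂ) ^ 2)⁻¹ * besselJ n (n * z)‖ ≤ ((n : ℝ) ^ 2)⁻¹ := by
  rcases eq_or_ne n 0 with rfl | hn
  · simp
  rw [norm_mul, norm_inv, norm_pow, Complex.norm_natCast]
  calc ((n : ℝ) ^ 2)⁻¹ * ‖besselJ n (n * z)‖ ≤ ((n : ℝ) ^ 2)⁻¹ * Omega z ^ n := by
        gcongr
        exact norm_besselJ_nat_mul_le_Omega_pow z hn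
    _ ≤ ((n : ℝ) ^ 2)⁻¹ := mul_le_of_le_one_right (by positivity) (pow_le_one₀ (norm_nonneg _) hz)

theorem tendstoUniformlyOn_tsum_range_succ {β F : Type*} [NormedAddCommGroup F] [CompleteSpace F]
    {f : ℕ → β → F} {u : ℕ → ℝ} (hu : Summable u) {s : Set β}
    (hfu : ∀ n, ∀ x ∈ s, ‖f n x‖ ≤ u n) :
    TendstoUniformlyOn (fun N x => ∑ n ∈ Finset.range (N + 1), f n x) (fun x => ∑' n, f n x)
      atTop s :=
  fun v hv => (tendsto_finset_range.comp (tendsto_add_atTop_nat 1)).eventually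
    (tendstoUniformlyOn_tsum hu hfu v hv)

theorem tendsto_norm_inv_natCast_sq_rpow_inv :
    Tendsto (fun n : ℕ => ‖((n : ℂ) ^ 2)⁻¹‖ ^ (n : ℝ)⁻¹) atTop (𝓝 1) := by
  have h := (tendsto_rpow_neg_div.pow 2).comp tendsto_natCast_atTop_atTop
  rw [one_pow] at h
  refine h.congr fun n => ?_
  have hn : (0 : ℝ) ≤ n := n.cast_nonneg
  rw [Function.comp_apply, norm_inv, norm_pow, Complex.norm_natCast, Real.inv_rpow (by positivity),
    ← Real.rpow_natCast, ← Real.rpow_mul hn, ← Real.rpow_natCast, ← Real.rpow_mul hn,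
    ← Real.rpow_neg hn]
  ring_nf

/-- the Kapteyn series `Σ_{n≥1} n⁻² J_n(nz)` converges absolutely and uniformly
on `{Ω ≤ 1}`; in particular it converges at every point of `S`, even though its convergence
level is `ρ = 1`, i.e. `limsup |n⁻²|^(1/n) = 1`.
(Here the coefficient `((n : ℂ)^2)⁻¹` vanishes for `n = 0`, so the sum effectively starts at
`n = 1`.) -/
theorem stmt_17 :
    (∃ g : ℂ → ℝ, TendstoUniformlyOn
      (fun (N : ℕ) (z : ℂ) => ∑ n ∈ Finset.range (N + 1),
        ‖((n : ℂ) ^ 2)⁻¹ * besselJ n ((n : ℂ) * z)‖)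
      g atTop {z : ℂ | Omega z ≤ 1}) ∧
    (∃ F : ℂ → ℂ, TendstoUniformlyOn
      (fun (N : ℕ) (z : ℂ) => ∑ n ∈ Finset.range (N + 1),
        ((n : ℂ) ^ 2)⁻¹ * besselJ n ((n : ℂ) * z))
      F atTop {z : ℂ | Omega z ≤ 1}) ∧
    (∀ z : ℂ, Omega z ≤ 1 →
      Summable (fun n : ℕ => ‖((n : ℂ) ^ 2)⁻¹ * besselJ n ((n : ℂ) * z)‖)) ∧
    (∀ z ∈ SlitSet, ∃ L : ℂ, Tendsto (fun N : ℕ => ∑ n ∈ Finset.range (N + 1),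
      ((n : ℂ) ^ 2)⁻¹ * besselJ n ((n : ℂ) * z)) atTop (𝓝 L)) ∧
    limsup (fun n : ℕ => ‖((n : ℂ) ^ 2)⁻¹‖ ^ ((n : ℝ)⁻¹)) atTop = 1 := by
  have hM (n : ℕ) (z : ℂ) (hz : z ∈ {z : ℂ | Omega z ≤ 1}) :
      ‖((n : ℂ) ^ 2)⁻¹ * besselJ n (n * z)‖ ≤ ((n : ℝ) ^ 2)⁻¹ :=
    norm_inv_sq_mul_besselJ_nat_mul_le hz n
  have hu : Summable fun n : ℕ => ((n : ℝ) ^ 2)⁻¹ := Real.summable_nat_pow_inv.2 one_lt_two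
  have hF := tendstoUniformlyOn_tsum_range_succ hu hM
  refine ⟨⟨_, tendstoUniformlyOn_tsum_range_succ hu fun n z hz => ?_⟩, ⟨_, hF⟩,
    fun z hz => hu.of_nonneg_of_le (fun _ => norm_nonneg _) fun n => hM n z hz,
    fun z hz => ⟨_, hF.tendsto_at (Omega_eq_one_of_mem_SlitSet hz).le⟩,
    tendsto_norm_inv_natCast_sq_rpow_inv.limsup_eq⟩
  rw [norm_norm]
  exact hM n z hz
end
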